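/- arXiv:2111.06999 — 9 statements merged into one kernel-verified Lean document; each statement's English description precedes it below -/
import Mathlib

section
/- Let G be a finite directed multigraph and let ≃ be an equivalence relation on N_G satisfying the local in-isomorphism property. Then there exists a directed multigraph B and a surjective fibration φ: G → B whose fibres are exactly the equivalence classes of ≃. -/
/-- A directed multigraph: node set `N`, arc set `A`, source and target maps. -/
structure Multigraph (N A : Type) where
  s : A → N
  t : A → N

/-- A homomorphism of directed multigraphs: maps on nodes and arcs commuting
with source and target. -/
structure GraphHom {N A N' A' : Type} (G : Multigraph N A) (B : Multigraph N' A') where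
  nodeMap : N → N'
  arcMap : A → A'
  map_s : ∀ a, B.s (arcMap a) = nodeMap (G.s a)
  map_t : ∀ a, B.t (arcMap a) = nodeMap (G.t a)

/-- A fibration: every arc of the base lifts uniquely at every node in the
fibre of its target. -/
def IsFibration {N A N' A' : Type} {G : Multigraph N A} {B : Multigraph N' A'}
    (φ : GraphHom G B) : Prop :=
  ∀ (a : A') (x : N), φ.nodeMap x = B.t a →
    ∃! a' : A, φ.arcMap a' = a ∧ G.t a' = x

/-- If an equivalence relation on the nodes of a finite graph `G` satisfies the
local in-isomorphism property, then there is a graph `B` and a surjective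
fibration `φ : G → B` whose fibres are exactly the equivalence classes. -/
theorem local_in_isomorphism_gives_fibration {N A : Type} [Fintype N] [Fintype A]
    (G : Multigraph N A) (r : N → N → Prop) (hequiv : Equivalence r)
    (hlii : ∀ x y : N, r x y →
      ∃ e : {a : A // G.t a = x} ≃ {a : A // G.t a = y},
        ∀ a : {a : A // G.t a = x}, r (G.s a.val) (G.s (e a).val)) :
    ∃ (N' A' : Type) (B : Multigraph N' A') (φ : GraphHom G B),
      IsFibration φ ∧
      Function.Surjective φ.nodeMap ∧
      Function.Surjective φ.arcMap ∧
      ∀ x y : N, φ.nodeMap x = φ.nodeMap y ↔ r x y := by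
  classical
  letI S : Setoid N := ⟨r, hequiv⟩
  have key : ∀ x : N, ∃ e : {a : A // G.t a = x} ≃
      {a : A // G.t a = Quotient.out (⟦x⟧ : Quotient S)},
      ∀ a, r (G.s a.val) (G.s (e a).val) := fun x =>
    hlii x _ (hequiv.symm (Quotient.exact (Quotient.out_eq (⟦x⟧ : Quotient S))))
  choose E hE using key
  set A' := Σ c : Quotient S, {a : A // G.t a = Quotient.out c} with hA'
  set B : Multigraph (Quotient S) A' :=
    { s := fun p => ⟦G.s p.2.1⟧, t := fun p => p.1 } with hB
  have arcMap_eq : ∀ (a : A) (x : N) (h : G.t a = x),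
      (⟨⟦G.t a⟧, E (G.t a) ⟨a, rfl⟩⟩ : A') = ⟨⟦x⟧, E x ⟨a, h⟩⟩ := by
    intro a x h; subst h; rfl
  set φ : GraphHom G B :=
    { nodeMap := fun x => ⟦x⟧
      arcMap := fun a => ⟨⟦G.t a⟧, E (G.t a) ⟨a, rfl⟩⟩
      map_s := fun a => (Quotient.sound (hE (G.t a) ⟨a, rfl⟩)).symm
      map_t := fun a => rfl } with hφ
  have hfib : IsFibration φ := by
    intro a x hx
    obtain ⟨c, b⟩ := a
    simp only [hφ, hB] at hx ⊢
    subst hx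
    refine ⟨((E x).symm b).1, ⟨?_, ((E x).symm b).2⟩, ?_⟩
    · rw [arcMap_eq _ x ((E x).symm b).2]
      simp
    · rintro a' ⟨ha1, ha2⟩
      rw [arcMap_eq _ x ha2] at ha1
      have h2 : E x ⟨a', ha2⟩ = b := by
        have := (Sigma.mk.inj_iff.mp ha1).2
        exact eq_of_heq this
      have := congrArg (E x).symm h2
      simp at this
      exact congrArg Subtype.val this.symm ▸ rfl
  refine ⟨Quotient S, A', B, φ, hfib, ?_, ?_, ?_⟩
  · exact fun c => ⟨Quotient.out c, Quotient.out_eq c⟩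
  · intro a
    obtain ⟨a', ⟨h1, _⟩, _⟩ := hfib a (Quotient.out a.1) (Quotient.out_eq a.1)
    exact ⟨a', h1⟩
  · intro x y
    exact ⟨fun h => Quotient.exact h, fun h => Quotient.sound h⟩
end

section
/- If φ: G → B is a fibration of directed multigraphs and φ(x) = φ(y), then the universal total graphs (views) of G at x and at y are isomorphic as rooted in-trees: view_G(x) ≅ view_G(y). -/
/-- `IsPathTo G l x` : `l` is (the reversed arc list of) a path ending at `x`;
the head of `l` is the arc closest to `x`. The empty list is the empty path at `x`. -/
def IsPathTo {N A : Type} (G : Multigraph N A) : List A → N → Prop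
  | [], _ => True
  | a :: l, x => G.t a = x ∧ IsPathTo G l (G.s a)

/-- Nodes of the view (universal total graph) of `G` at `x`: finite paths ending at `x`. -/
abbrev View {N A : Type} (G : Multigraph N A) (x : N) := {l : List A // IsPathTo G l x}

/-- Isomorphism of views as rooted in-trees: a bijection of paths preserving the
root (the empty path) and the tree arc relation (`p` is obtained from `q` by
prepending one arc at the far end). -/
def ViewIso {N A : Type} (G : Multigraph N A) (x y : N) : Prop :=
  ∃ e : View G x ≃ View G y,
    ((e ⟨[], by simp [IsPathTo]⟩ : View G y) : List A) = [] ∧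
    ∀ p q : View G x,
      (∃ a, (p : List A) = (q : List A) ++ [a]) ↔
      (∃ a, ((e p : View G y) : List A) = ((e q : View G y) : List A) ++ [a])

/-!
A fibration has unique path lifting: a path of `G` ending at a node is determined by that node
and its image in `B`, and a path ending at `x` lifts, arc by arc starting next to the end, to a
path ending at any node `y` of the fibre of `x`. Matching the paths ending at `x` and at `y`
that have the same image is therefore a bijection, which fixes the empty path. It respects the
tree arcs because dropping the far-end arc of a lift gives the lift of the shortened path.
-/

theorem IsPathTo.of_append {N A : Type} {G : Multigraph N A} :
    ∀ {l m : List A} {x : N}, IsPathTo G (l ++ m) x → IsPathTo G l x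
  | [], _, _, _ => trivial
  | _ :: _, _, _, h => ⟨h.1, IsPathTo.of_append h.2⟩

namespace IsFibration

variable {N A N' A' : Type} {G : Multigraph N A} {B : Multigraph N' A'} {φ : GraphHom G B}

theorem eq_of_map_arcMap_eq (hφ : IsFibration φ) :
    ∀ {l l' : List A} {y : N}, IsPathTo G l y → IsPathTo G l' y →
      l.map φ.arcMap = l'.map φ.arcMap → l = l'
  | [], [], _, _, _, _ => rfl
  | a :: l, a' :: l', y, hl, hl', hmap => by
    obtain ⟨harc, htail⟩ := List.cons_eq_cons.mp hmap
    have hy : φ.nodeMap y = B.t (φ.arcMap a) := by rw [φ.map_t, hl.1]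
    have ha : a = a' := (hφ _ y hy).unique ⟨rfl, hl.1⟩ ⟨harc.symm, hl'.1⟩
    subst ha
    rw [eq_of_map_arcMap_eq hφ hl.2 hl'.2 htail]

theorem exists_lift (hφ : IsFibration φ) :
    ∀ {l : List A} {x y : N}, IsPathTo G l x → φ.nodeMap x = φ.nodeMap y →
      ∃ l' : List A, IsPathTo G l' y ∧ l'.map φ.arcMap = l.map φ.arcMap
  | [], _, _, _, _ => ⟨[], trivial, rfl⟩
  | a :: _, x, y, hl, hxy => by
    have hy : φ.nodeMap y = B.t (φ.arcMap a) := by rw [φ.map_t, hl.1, hxy]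
    obtain ⟨a', ⟨harc, hta'⟩, -⟩ := hφ _ y hy
    have hsrc : φ.nodeMap (G.s a) = φ.nodeMap (G.s a') := by rw [← φ.map_s, ← φ.map_s, harc]
    obtain ⟨l', hl', hmap⟩ := exists_lift hφ hl.2 hsrc
    exact ⟨a' :: l', ⟨hta', hl'⟩, by rw [List.map_cons, List.map_cons, harc, hmap]⟩

/-- The unique path ending at `y` with the same image in `B` as `p`. -/
noncomputable def liftView (hφ : IsFibration φ) {x y : N} (hxy : φ.nodeMap x = φ.nodeMap y)
    (p : View G x) : View G y :=
  ⟨(hφ.exists_lift p.2 hxy).choose, (hφ.exists_lift p.2 hxy).choose_spec.1⟩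

theorem map_liftView (hφ : IsFibration φ) {x y : N} (hxy : φ.nodeMap x = φ.nodeMap y)
    (p : View G x) : (hφ.liftView hxy p).1.map φ.arcMap = p.1.map φ.arcMap :=
  (hφ.exists_lift p.2 hxy).choose_spec.2

theorem liftView_liftView (hφ : IsFibration φ) {x y : N} (hxy : φ.nodeMap x = φ.nodeMap y)
    (p : View G x) : hφ.liftView hxy.symm (hφ.liftView hxy p) = p :=
  Subtype.ext <| hφ.eq_of_map_arcMap_eq (hφ.liftView hxy.symm _).2 p.2 <| by
    rw [map_liftView, map_liftView]

theorem liftView_nil (hφ : IsFibration φ) {x y : N} (hxy : φ.nodeMap x = φ.nodeMap y) :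
    (hφ.liftView hxy ⟨[], trivial⟩).1 = [] :=
  List.map_eq_nil_iff.mp (hφ.map_liftView hxy _)

theorem liftView_append (hφ : IsFibration φ) {x y : N} (hxy : φ.nodeMap x = φ.nodeMap y)
    {p q : View G x} (hpq : ∃ a, p.1 = q.1 ++ [a]) :
    ∃ b, (hφ.liftView hxy p).1 = (hφ.liftView hxy q).1 ++ [b] := by
  obtain ⟨a, hpa⟩ := hpq
  have hmap := hφ.map_liftView hxy p
  rw [hpa, List.map_append, ← hφ.map_liftView hxy q] at hmap
  obtain ⟨l, m, hlm, hl, hm⟩ := List.map_eq_append_iff.mp hmap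
  obtain ⟨b, rfl, -⟩ := List.map_eq_singleton_iff.mp hm
  have hpath : IsPathTo G l y := IsPathTo.of_append (hlm ▸ (hφ.liftView hxy p).2)
  exact ⟨b, by rw [hlm, hφ.eq_of_map_arcMap_eq hpath (hφ.liftView hxy q).2 hl]⟩

noncomputable def viewEquiv (hφ : IsFibration φ) {x y : N} (hxy : φ.nodeMap x = φ.nodeMap y) :
    View G x ≃ View G y where
  toFun := hφ.liftView hxy
  invFun := hφ.liftView hxy.symm
  left_inv := hφ.liftView_liftView hxy
  right_inv := hφ.liftView_liftView hxy.symm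

end IsFibration

/-- Nodes in the same fibre of a fibration have isomorphic views. -/
theorem fibration_view_iso {N A N' A' : Type}
    {G : Multigraph N A} {B : Multigraph N' A'} (φ : GraphHom G B)
    (hφ : IsFibration φ) (x y : N) (hxy : φ.nodeMap x = φ.nodeMap y) :
    ViewIso G x y := by
  refine ⟨hφ.viewEquiv hxy, hφ.liftView_nil hxy, fun p q =>
    ⟨hφ.liftView_append hxy, fun h => ?_⟩⟩
  obtain ⟨b, hb⟩ :=
    hφ.liftView_append hxy.symm (p := hφ.liftView hxy p) (q := hφ.liftView hxy q) h
  rw [IsFibration.liftView_liftView, IsFibration.liftView_liftView] at hb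
  exact ⟨b, hb⟩
end

section
/- (Norris's theorem) Let G be a directed multigraph with n nodes. For all nodes x, y of G, the views view_G(x) and view_G(y) are isomorphic if and only if their truncations to height n−1 are isomorphic: view_G(x)↾(n−1) ≅ view_G(y)↾(n−1). -/
/-- Nodes of the truncation at height `k` of the view of `G` at `x`. -/
abbrev ViewTrunc {N A : Type} (G : Multigraph N A) (x : N) (k : ℕ) :=
  {l : List A // IsPathTo G l x ∧ l.length ≤ k}

/-- Isomorphism of the height-`k` truncations of the views at `x` and `y`,
as rooted trees. -/
def ViewTruncIso {N A : Type} (G : Multigraph N A) (x y : N) (k : ℕ) : Prop :=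
  ∃ e : ViewTrunc G x k ≃ ViewTrunc G y k,
    ((e ⟨[], by simp [IsPathTo]⟩ : ViewTrunc G y k) : List A) = [] ∧
    ∀ p q : ViewTrunc G x k,
      (∃ a, (p : List A) = (q : List A) ++ [a]) ↔
      (∃ a, ((e p : ViewTrunc G y k) : List A) = ((e q : ViewTrunc G y k) : List A) ++ [a])

/-!
Write `x ≃ₖ y` when the height-`k` truncations of the views at `x` and `y` are isomorphic.
These are equivalence relations on the nodes, each refining the previous one, so their numbers
of classes grow with `k`; as there are at most `n` classes, `≃ₖ` and `≃ₖ₊₁` coincide for some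
`k ≤ n - 1`. An isomorphism of height-`(k + 1)` truncations at `x` and `y` yields a bijection
between the in-arcs of `x` and of `y` together with isomorphisms of the height-`k` truncations
at corresponding sources. Hence `≃ₖ` is a bisimulation matching in-arcs bijectively, and
translating paths arc by arc along such a bisimulation is an isomorphism of the full views.
-/

section PrefixTree

variable {A : Type*} {P Q R : List A → Prop}

def IsPrefixClosed (P : List A → Prop) : Prop :=
  ∀ l a, P (l ++ [a]) → P l

theorem IsPrefixClosed.and (hP : IsPrefixClosed P) (hQ : IsPrefixClosed Q) :
    IsPrefixClosed fun l => P l ∧ Q l :=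
  fun l a h => ⟨hP l a h.1, hQ l a h.2⟩

theorem isPrefixClosed_length_le (k : ℕ) : IsPrefixClosed fun l : List A => l.length ≤ k :=
  fun l a h => by simp only [List.length_append, List.length_singleton] at h; omega

/-- A prefix-closed set of lists is a rooted tree: its root is `[]` and the parent of `l ++ [a]`
is `l`. -/
structure IsTreeIso (e : {l : List A // P l} ≃ {l // Q l}) : Prop where
  map_nil : ∀ p : {l // P l}, p.1 = [] → (e p).1 = []
  child_iff : ∀ p q : {l // P l}, (∃ a, p.1 = q.1 ++ [a]) ↔ ∃ a, (e p).1 = (e q).1 ++ [a]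

def TreeIso (P Q : List A → Prop) : Prop :=
  ∃ e : {l : List A // P l} ≃ {l // Q l}, IsTreeIso e

namespace IsTreeIso

variable {e : {l : List A // P l} ≃ {l // Q l}}

theorem length_eq (hP : IsPrefixClosed P) (he : IsTreeIso e) (p : {l // P l}) :
    (e p).1.length = p.1.length := by
  obtain ⟨l, hl⟩ := p
  induction l using List.reverseRecOn with
  | nil => simp [he.map_nil ⟨[], hl⟩ rfl]
  | append_singleton l a ih =>
    obtain ⟨d, hd⟩ := (he.child_iff ⟨l ++ [a], hl⟩ ⟨l, hP l a hl⟩).1 ⟨a, rfl⟩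
    simp [hd, ih]

theorem map_isPrefix (hP : IsPrefixClosed P) (he : IsTreeIso e) {p q : {l // P l}}
    (h : q.1 <+: p.1) : (e q).1 <+: (e p).1 := by
  obtain ⟨l, hl⟩ := p
  obtain ⟨l', hl'⟩ := q
  obtain ⟨m, rfl⟩ := h
  induction m using List.reverseRecOn with
  | nil => simp
  | append_singleton m a ih =>
    have hm : P (l' ++ m) := hP _ a (by simpa using hl)
    obtain ⟨d, hd⟩ :=
      (he.child_iff ⟨l' ++ m ++ [a], by simpa using hl⟩ ⟨l' ++ m, hm⟩).1 ⟨a, rfl⟩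
    simp only [List.append_assoc] at hd ⊢
    exact (ih hm).trans (hd ▸ List.prefix_append _ _)

theorem symm (hP : IsPrefixClosed P) (he : IsTreeIso e) : IsTreeIso e.symm where
  map_nil q hq := by
    simpa [hq] using (he.length_eq hP (e.symm q)).symm
  child_iff p q := by
    simpa using (he.child_iff (e.symm p) (e.symm q)).symm

theorem trans {e' : {l : List A // Q l} ≃ {l // R l}} (he : IsTreeIso e) (he' : IsTreeIso e') :
    IsTreeIso (e.trans e') where
  map_nil p hp := he'.map_nil _ (he.map_nil p hp)
  child_iff p q := (he.child_iff p q).trans (he'.child_iff (e p) (e q))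

theorem of_map_append (hP : IsPrefixClosed P)
    (map_nil : ∀ p : {l // P l}, p.1 = [] → (e p).1 = [])
    (map_append : ∀ (p q : {l // P l}) a, p.1 = q.1 ++ [a] → ∃ b, (e p).1 = (e q).1 ++ [b]) :
    IsTreeIso e := by
  refine ⟨map_nil, fun p q => ⟨fun ⟨a, h⟩ => map_append p q a h, fun ⟨b, hb⟩ => ?_⟩⟩
  obtain ⟨l, hl⟩ := p
  rcases List.eq_nil_or_concat' l with rfl | ⟨l', a, rfl⟩
  · simp [map_nil ⟨[], hl⟩ rfl] at hb
  obtain ⟨b', hb'⟩ := map_append ⟨l' ++ [a], hl⟩ ⟨l', hP l' a hl⟩ a rfl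
  have : (⟨l', hP l' a hl⟩ : {l // P l}) = q :=
    e.injective (Subtype.ext (List.append_inj_left' (hb'.symm.trans hb) rfl))
  exact ⟨a, by rw [← this]⟩

theorem cons_tail (hP : IsPrefixClosed P) (he : IsTreeIso e) {a b : A} (ha : P [a])
    (hab : (e ⟨[a], ha⟩).1 = [b]) {m : List A} (h : P (a :: m)) :
    b :: (e ⟨a :: m, h⟩).1.tail = (e ⟨a :: m, h⟩).1 := by
  obtain ⟨t, ht⟩ :=
    he.map_isPrefix hP (p := ⟨a :: m, h⟩) (q := ⟨[a], ha⟩) (List.prefix_append [a] m)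
  rw [hab] at ht
  rw [← ht]
  rfl

theorem treeIso_subtree (hP : IsPrefixClosed P) (hQ : IsPrefixClosed Q) (he : IsTreeIso e)
    {a b : A} (ha : P [a]) (hab : (e ⟨[a], ha⟩).1 = [b]) :
    TreeIso (fun m => P (a :: m)) (fun m => Q (b :: m)) := by
  have hb : Q [b] := hab ▸ (e ⟨[a], ha⟩).2
  have hba : (e.symm ⟨[b], hb⟩).1 = [a] := by
    rw [show (⟨[b], hb⟩ : {l // Q l}) = e ⟨[a], ha⟩ from Subtype.ext hab.symm, e.symm_apply_apply]
  have hcons := fun m (h : P (a :: m)) => he.cons_tail hP ha hab h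
  have hcons' := fun m (h : Q (b :: m)) => (he.symm hP).cons_tail hQ hb hba h
  refine ⟨⟨fun m => ⟨(e ⟨a :: m.1, m.2⟩).1.tail, by beta_reduce; rw [hcons]; exact (e _).2⟩,
    fun m => ⟨(e.symm ⟨b :: m.1, m.2⟩).1.tail, by beta_reduce; rw [hcons']; exact (e.symm _).2⟩,
    fun m => ?_, fun m => ?_⟩, ⟨fun m hm => ?_, fun m m' => ?_⟩⟩
  · apply Subtype.ext
    simp [hcons]
  · apply Subtype.ext
    simp [hcons']
  · obtain ⟨m, _⟩ := m
    obtain rfl : m = [] := hm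
    show (e ⟨[a], _⟩).1.tail = []
    rw [hab]
    rfl
  · show (∃ c, m.1 = m'.1 ++ [c]) ↔
      ∃ d, (e ⟨a :: m.1, m.2⟩).1.tail = (e ⟨a :: m'.1, m'.2⟩).1.tail ++ [d]
    have h := he.child_iff ⟨a :: m.1, m.2⟩ ⟨a :: m'.1, m'.2⟩
    rw [← hcons m.1 m.2, ← hcons m'.1 m'.2] at h
    simpa using h

end IsTreeIso

namespace TreeIso

theorem refl (P : List A → Prop) : TreeIso P P :=
  ⟨Equiv.refl _, fun _ h => h, fun _ _ => Iff.rfl⟩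

theorem symm (hP : IsPrefixClosed P) : TreeIso P Q → TreeIso Q P
  | ⟨e, he⟩ => ⟨e.symm, he.symm hP⟩

theorem trans : TreeIso P Q → TreeIso Q R → TreeIso P R
  | ⟨e, he⟩, ⟨e', he'⟩ => ⟨e.trans e', he.trans he'⟩

theorem of_iff {P' Q' : List A → Prop} (h : TreeIso P Q) (hP : ∀ l, P l ↔ P' l)
    (hQ : ∀ l, Q l ↔ Q' l) : TreeIso P' Q' := by
  obtain rfl : P = P' := funext fun l => propext (hP l)
  obtain rfl : Q = Q' := funext fun l => propext (hQ l)
  exact h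

theorem restrict (hP : IsPrefixClosed P) (h : TreeIso P Q) (k : ℕ) :
    TreeIso (fun l => P l ∧ l.length ≤ k) (fun l => Q l ∧ l.length ≤ k) := by
  obtain ⟨e, he⟩ := h
  have hlen : ∀ p, (e p).1.length ≤ k ↔ p.1.length ≤ k := fun p => by rw [he.length_eq hP]
  refine ⟨(Equiv.subtypeSubtypeEquivSubtypeInter P _).symm.trans
    ((e.subtypeEquiv fun p => (hlen p).symm).trans (Equiv.subtypeSubtypeEquivSubtypeInter Q _)),
    fun p hp => he.map_nil ⟨p.1, p.2.1⟩ hp, fun p q => he.child_iff ⟨p.1, p.2.1⟩ ⟨q.1, q.2.1⟩⟩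

theorem exists_equiv_children (hP : IsPrefixClosed P) (hQ : IsPrefixClosed Q)
    (h : TreeIso P Q) :
    ∃ θ : {a // P [a]} ≃ {b // Q [b]},
      ∀ a, TreeIso (fun m => P (a.1 :: m)) (fun m => Q ((θ a).1 :: m)) := by
  obtain ⟨e, he⟩ := h
  have singleton (a : {a // P [a]}) : ∃ b, (e ⟨[a.1], a.2⟩).1 = [b] :=
    List.length_eq_one_iff.1 (he.length_eq hP _)
  choose f hf using singleton
  let θ (a : {a // P [a]}) : {b // Q [b]} := ⟨f a, hf a ▸ (e _).2⟩
  have hθ : θ.Bijective := by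
    refine ⟨fun a a' haa' => ?_, fun b => ?_⟩
    · have : e ⟨[a.1], a.2⟩ = e ⟨[a'.1], a'.2⟩ :=
        Subtype.ext (by rw [hf, hf]; exact congrArg (fun b => [b.1]) haa')
      exact Subtype.ext (by simpa using e.injective this)
    · obtain ⟨a, ha⟩ := List.length_eq_one_iff.1 ((he.symm hP).length_eq hQ ⟨[b.1], b.2⟩)
      have hPa : P [a] := ha ▸ (e.symm ⟨[b.1], b.2⟩).2
      refine ⟨⟨a, hPa⟩, Subtype.ext ?_⟩
      have : e ⟨[a], hPa⟩ = ⟨[b.1], b.2⟩ := by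
        rw [← e.apply_symm_apply ⟨[b.1], b.2⟩]
        exact congrArg e (Subtype.ext ha.symm)
      simpa [this, θ] using (hf ⟨a, hPa⟩).symm
  exact ⟨Equiv.ofBijective θ hθ, fun a => he.treeIso_subtree hP hQ a.2 (hf a)⟩

end TreeIso

end PrefixTree

theorem Setoid.card_quotient_lt_card_quotient {α : Type*} [Finite α] {r s : Setoid α}
    (h : s < r) : Nat.card (Quotient r) < Nat.card (Quotient s) := by
  let f : Quotient s → Quotient r := Quotient.map' id fun _ _ hxy => h.le hxy
  have hf : f.Surjective := fun q => q.inductionOn fun x => ⟨⟦x⟧, rfl⟩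
  refine (Nat.card_le_card_of_surjective f hf).lt_of_ne fun hcard => h.not_ge fun x y hxy => ?_
  exact Quotient.exact ((hf.bijective_of_nat_card_le hcard.ge).1 (Quotient.sound hxy :
    f ⟦x⟧ = f ⟦y⟧))

theorem Setoid.exists_le_succ_of_antitone {α : Type*} [Finite α] {r : ℕ → Setoid α}
    (hr : Antitone r) : ∃ k ≤ Nat.card α - 1, r k ≤ r (k + 1) := by
  by_contra! hlt
  rcases isEmpty_or_nonempty α with hα | hα
  · exact hlt 0 (Nat.zero_le _) fun x => isEmptyElim x
  have hclasses (k : ℕ) (hk : k ≤ Nat.card α) : k + 1 ≤ Nat.card (Quotient (r k)) := by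
    induction k with
    | zero => exact Nat.card_pos_iff.2 ⟨⟨⟦hα.some⟧⟩, inferInstance⟩
    | succ k ih =>
      have := card_quotient_lt_card_quotient
        ((hr (Nat.le_add_right k 1)).lt_of_not_ge (hlt k (by omega)))
      have := ih (by omega)
      omega
  have := Nat.card_le_card_of_surjective _ (Quotient.mk_surjective (s := r (Nat.card α)))
  have := hclasses _ le_rfl
  omega

section Views

variable {N A : Type} {G : Multigraph N A}

theorem isPrefixClosed_isPathTo (x : N) : IsPrefixClosed (IsPathTo G · x) := by
  intro l a h
  induction l generalizing x with
  | nil => trivial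
  | cons b m ih => exact ⟨h.1, ih _ h.2⟩

theorem isPrefixClosed_viewTrunc (x : N) (k : ℕ) :
    IsPrefixClosed fun l => IsPathTo G l x ∧ l.length ≤ k :=
  (isPrefixClosed_isPathTo x).and (isPrefixClosed_length_le k)

theorem viewIso_iff_treeIso {x y : N} :
    ViewIso G x y ↔ TreeIso (IsPathTo G · x) (IsPathTo G · y) := by
  refine ⟨fun ⟨e, hroot, hchild⟩ => ⟨e, fun ⟨l, hl⟩ hnil => ?_, hchild⟩,
    fun ⟨e, he⟩ => ⟨e, he.map_nil _ rfl, he.child_iff⟩⟩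
  obtain rfl : l = [] := hnil
  exact hroot

theorem viewTruncIso_iff_treeIso {x y : N} {k : ℕ} :
    ViewTruncIso G x y k ↔
      TreeIso (fun l => IsPathTo G l x ∧ l.length ≤ k)
        (fun l => IsPathTo G l y ∧ l.length ≤ k) := by
  refine ⟨fun ⟨e, hroot, hchild⟩ => ⟨e, fun ⟨l, hl⟩ hnil => ?_, hchild⟩,
    fun ⟨e, he⟩ => ⟨e, he.map_nil _ rfl, he.child_iff⟩⟩
  obtain rfl : l = [] := hnil
  exact hroot

theorem ViewIso.viewTruncIso {x y : N} (h : ViewIso G x y) (k : ℕ) : ViewTruncIso G x y k :=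
  viewTruncIso_iff_treeIso.2 ((viewIso_iff_treeIso.1 h).restrict (isPrefixClosed_isPathTo x) k)

theorem ViewTruncIso.mono {x y : N} {k k' : ℕ} (h : ViewTruncIso G x y k) (hk : k' ≤ k) :
    ViewTruncIso G x y k' := by
  have hP (z : N) (l : List A) :
      ((IsPathTo G l z ∧ l.length ≤ k) ∧ l.length ≤ k') ↔ IsPathTo G l z ∧ l.length ≤ k' :=
    ⟨fun h => ⟨h.1.1, h.2⟩, fun h => ⟨⟨h.1, h.2.trans hk⟩, h.2⟩⟩
  exact viewTruncIso_iff_treeIso.2 (((viewTruncIso_iff_treeIso.1 h).restrict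
    (isPrefixClosed_viewTrunc x k) k').of_iff (hP x) (hP y))

variable (G) in
def viewTruncSetoid (k : ℕ) : Setoid N where
  r x y := ViewTruncIso G x y k
  iseqv.refl _ := viewTruncIso_iff_treeIso.2 (TreeIso.refl _)
  iseqv.symm {x _} h :=
    viewTruncIso_iff_treeIso.2
      ((viewTruncIso_iff_treeIso.1 h).symm (isPrefixClosed_viewTrunc x k))
  iseqv.trans h h' :=
    viewTruncIso_iff_treeIso.2
      ((viewTruncIso_iff_treeIso.1 h).trans (viewTruncIso_iff_treeIso.1 h'))

theorem antitone_viewTruncSetoid : Antitone (viewTruncSetoid G) :=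
  fun _ _ hk _ _ h => ViewTruncIso.mono h hk

theorem ViewTruncIso.exists_equiv_inArcs {x y : N} {k : ℕ} (h : ViewTruncIso G x y (k + 1)) :
    ∃ θ : {a // G.t a = x} ≃ {b // G.t b = y},
      ∀ a, ViewTruncIso G (G.s a.1) (G.s (θ a).1) k := by
  obtain ⟨θ, hθ⟩ := (viewTruncIso_iff_treeIso.1 h).exists_equiv_children
    (isPrefixClosed_viewTrunc x _) (isPrefixClosed_viewTrunc y _)
  have singleton (z : N) (a : A) : (IsPathTo G [a] z ∧ [a].length ≤ k + 1) ↔ G.t a = z := by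
    simp [IsPathTo]
  have cons (z : N) (a : {a // G.t a = z}) (m : List A) :
      (IsPathTo G (a.1 :: m) z ∧ (a.1 :: m).length ≤ k + 1) ↔
        IsPathTo G m (G.s a.1) ∧ m.length ≤ k := by
    simp [IsPathTo, a.2]
  let θ' := (Equiv.subtypeEquivRight (singleton x)).symm.trans
    (θ.trans (Equiv.subtypeEquivRight (singleton y)))
  exact ⟨θ', fun a => viewTruncIso_iff_treeIso.2 ((hθ _).of_iff (cons x a) (cons y (θ' a)))⟩

end Views

section Bisimulation

variable {N A : Type} {G : Multigraph N A}

variable (G) in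
def IsViewBisimulation (R : N → N → Prop) : Prop :=
  ∀ u v, R u v → ∃ θ : {a // G.t a = u} ≃ {b // G.t b = v}, ∀ a, R (G.s a.1) (G.s (θ a).1)

variable {R : N → N → Prop} (Θ : ∀ u v, R u v → {a // G.t a = u} ≃ {b // G.t b = v})
  (hΘ : ∀ u v (h : R u v) (a : {a // G.t a = u}), R (G.s a.1) (G.s (Θ u v h a).1))

def translatePath : (l : List A) → {u v : N} → R u v → IsPathTo G l u → List A
  | [], _, _, _, _ => []
  | a :: m, u, v, h, hp => (Θ u v h ⟨a, hp.1⟩).1 :: translatePath m (hΘ u v h ⟨a, hp.1⟩) hp.2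

theorem isPathTo_translatePath {l : List A} {u v : N} (h : R u v) (hp : IsPathTo G l u) :
    IsPathTo G (translatePath Θ hΘ l h hp) v := by
  induction l generalizing u v with
  | nil => trivial
  | cons a m ih => exact ⟨(Θ u v h ⟨a, hp.1⟩).2, ih _ hp.2⟩

theorem translatePath_append {l : List A} {c : A} {u v : N} (h : R u v)
    (hp : IsPathTo G (l ++ [c]) u) : ∃ d, translatePath Θ hΘ (l ++ [c]) h hp =
      translatePath Θ hΘ l h (isPrefixClosed_isPathTo u l c hp) ++ [d] := by
  induction l generalizing u v with
  | nil => exact ⟨_, rfl⟩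
  | cons a m ih =>
    obtain ⟨d, hd⟩ := ih (hΘ u v h ⟨a, hp.1⟩) hp.2
    exact ⟨d, congrArg (_ :: ·) hd⟩

theorem translatePath_injective {l l' : List A} {u v : N} (h : R u v) (hp : IsPathTo G l u)
    (hp' : IsPathTo G l' u) (heq : translatePath Θ hΘ l h hp = translatePath Θ hΘ l' h hp') :
    l = l' := by
  induction l generalizing l' u v with
  | nil => cases l' <;> simp_all [translatePath]
  | cons a m ih =>
    cases l' with
    | nil => simp [translatePath] at heq
    | cons a' m' =>
      simp only [translatePath, List.cons.injEq] at heq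
      obtain rfl : a = a' := congrArg Subtype.val ((Θ u v h).injective (Subtype.ext heq.1))
      exact congrArg (a :: ·) (ih _ hp.2 hp'.2 heq.2)

theorem exists_translatePath_eq {l' : List A} {u v : N} (h : R u v) (hp' : IsPathTo G l' v) :
    ∃ (l : List A) (hp : IsPathTo G l u), translatePath Θ hΘ l h hp = l' := by
  induction l' generalizing u v with
  | nil => exact ⟨[], trivial, rfl⟩
  | cons b m' ih =>
    obtain ⟨a, ha⟩ := (Θ u v h).surjective ⟨b, hp'.1⟩
    have hR : R (G.s a.1) (G.s b) := by simpa [ha] using hΘ u v h a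
    obtain ⟨m, hm, rfl⟩ := ih hR hp'.2
    refine ⟨a.1 :: m, ⟨a.2, hm⟩, ?_⟩
    simp [translatePath, ha]

theorem IsViewBisimulation.viewIso (hR : IsViewBisimulation G R) {x y : N} (h : R x y) :
    ViewIso G x y := by
  choose Θ hΘ using hR
  let F (p : View G x) : View G y :=
    ⟨translatePath Θ hΘ p.1 h p.2, isPathTo_translatePath Θ hΘ h p.2⟩
  have hF : F.Bijective := by
    refine ⟨fun p q hpq =>
      Subtype.ext (translatePath_injective Θ hΘ h p.2 q.2 (congrArg (·.1) hpq)), fun q => ?_⟩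
    obtain ⟨l, hl, hq⟩ := exists_translatePath_eq Θ hΘ h q.2
    exact ⟨⟨l, hl⟩, Subtype.ext hq⟩
  refine viewIso_iff_treeIso.2 ⟨Equiv.ofBijective F hF,
    IsTreeIso.of_map_append (isPrefixClosed_isPathTo x) (fun p hp => ?_) (fun p q c hpq => ?_)⟩
  · obtain ⟨l, hl⟩ := p
    obtain rfl : l = [] := hp
    rfl
  · obtain ⟨l, hl⟩ := p
    obtain ⟨l', hl'⟩ := q
    obtain rfl : l = l' ++ [c] := hpq
    exact translatePath_append Θ hΘ h hl

end Bisimulation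

/-- Norris's theorem: in a graph with `n` nodes, two views are isomorphic iff
their truncations at height `n - 1` are isomorphic. -/
theorem norris {N A : Type} [Fintype N] (G : Multigraph N A) (x y : N) :
    ViewIso G x y ↔ ViewTruncIso G x y (Fintype.card N - 1) := by
  refine ⟨fun h => h.viewTruncIso _, fun h => ?_⟩
  obtain ⟨k, hk, hstable⟩ := Setoid.exists_le_succ_of_antitone (antitone_viewTruncSetoid (G := G))
  have hbisim : IsViewBisimulation G (ViewTruncIso G · · k) :=
    fun u v huv => (hstable huv).exists_equiv_inArcs
  exact hbisim.viewIso (h.mono (by rwa [Nat.card_eq_fintype_card] at hk))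
end

section
/- Define, for each k ≥ 0, the equivalence relation ≃_k on nodes of a directed multigraph G by x ≃_k y iff view_G(x)↾k ≅ view_G(y)↾k. Then x ≃_{k+1} y if and only if x ≃_k y and there exists a bijection ψ: G(-,x) → G(-,y) such that s(a) ≃_k s(ψ(a)) for all a ∈ G(-,x). -/
namespace ViewAux

variable {N A : Type} {G : Multigraph N A}

lemma isPathTo_append {l m : List A} {x : N} (h : IsPathTo G (l ++ m) x) :
    IsPathTo G l x := by
  induction l generalizing x with
  | nil => trivial
  | cons a l ih => exact ⟨h.1, ih h.2⟩

section iso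
variable {x y : N} {k : ℕ}

def RootCond (e : ViewTrunc G x k ≃ ViewTrunc G y k) : Prop :=
  ((e ⟨[], by simp [IsPathTo]⟩ : ViewTrunc G y k) : List A) = []

def ChildCond (e : ViewTrunc G x k ≃ ViewTrunc G y k) : Prop :=
  ∀ p q : ViewTrunc G x k,
    (∃ a, (p : List A) = (q : List A) ++ [a]) ↔
    (∃ a, ((e p : ViewTrunc G y k) : List A) = ((e q : ViewTrunc G y k) : List A) ++ [a])

variable {e : ViewTrunc G x k ≃ ViewTrunc G y k}

lemma map_nil (hroot : RootCond e) (p : ViewTrunc G x k) (hp : (p : List A) = []) :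
    ((e p : ViewTrunc G y k) : List A) = [] := by
  have : p = ⟨[], by simp [IsPathTo]⟩ := Subtype.ext hp
  rw [this]; exact hroot

lemma map_length (hroot : RootCond e) (hchild : ChildCond e) (p : ViewTrunc G x k) :
    ((e p : ViewTrunc G y k) : List A).length = (p : List A).length := by
  suffices H : ∀ n (p : ViewTrunc G x k), (p : List A).length ≤ n →
      ((e p : ViewTrunc G y k) : List A).length = (p : List A).length from H _ p le_rfl
  intro n
  induction n with
  | zero =>
    intro p hp
    have hp' : (p : List A) = [] := List.length_eq_zero_iff.mp (Nat.le_antisymm hp (Nat.zero_le _))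
    rw [map_nil hroot p hp', hp']
  | succ n ih =>
    intro p hp
    rcases (p : List A).eq_nil_or_concat with h | ⟨l, a, h⟩
    · rw [map_nil hroot p h, h]
    · rw [List.concat_eq_append] at h
      have hl : IsPathTo G l x := isPathTo_append (h ▸ p.2.1)
      have hlk : l.length ≤ k := le_trans (by simp [h]) p.2.2
      obtain ⟨b, hb⟩ := (hchild p ⟨l, hl, hlk⟩).mp ⟨a, h⟩
      have hln : l.length ≤ n := by
        have := hp; rw [h] at this; simpa using this
      rw [hb, h]
      simp [ih ⟨l, hl, hlk⟩ hln]

lemma map_prefix (hroot : RootCond e) (hchild : ChildCond e) (p q : ViewTrunc G x k)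
    (hpq : (q : List A) <+: (p : List A)) :
    ((e q : ViewTrunc G y k) : List A) <+: ((e p : ViewTrunc G y k) : List A) := by
  suffices H : ∀ n (p q : ViewTrunc G x k), (p : List A).length ≤ n →
      (q : List A) <+: (p : List A) →
      ((e q : ViewTrunc G y k) : List A) <+: ((e p : ViewTrunc G y k) : List A) from
    H _ p q le_rfl hpq
  intro n
  induction n with
  | zero =>
    intro p q hp hpq
    have hp' : (p : List A) = [] := List.length_eq_zero_iff.mp (Nat.le_antisymm hp (Nat.zero_le _))
    have hq' : (q : List A) = [] := List.prefix_nil.mp (hp' ▸ hpq)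
    rw [show q = p from Subtype.ext (hq'.trans hp'.symm)]
  | succ n ih =>
    intro p q hp hpq
    by_cases hqp : (q : List A) = (p : List A)
    · rw [Subtype.ext hqp]
    · rcases (p : List A).eq_nil_or_concat with h | ⟨l, a, h⟩
      · exact absurd ((List.prefix_nil.mp (h ▸ hpq)).trans h.symm) hqp
      · rw [List.concat_eq_append] at h
        have hl : IsPathTo G l x := isPathTo_append (h ▸ p.2.1)
        have hlk : l.length ≤ k := le_trans (by simp [h]) p.2.2
        have hqlen : (q : List A).length ≤ l.length := by
          have h1 : (q : List A).length ≤ (p : List A).length := hpq.length_le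
          have h2 : (q : List A).length ≠ (p : List A).length := fun hc =>
            hqp (hpq.eq_of_length hc)
          rw [h] at h1 h2
          simp at h1 h2
          omega
        have hql : (q : List A) <+: l :=
          List.prefix_of_prefix_length_le (h ▸ hpq) ⟨[a], rfl⟩ hqlen
        have hln : l.length ≤ n := by
          have := hp; rw [h] at this; simpa using this
        obtain ⟨b, hb⟩ := (hchild p ⟨l, hl, hlk⟩).mp ⟨a, h⟩
        exact (ih ⟨l, hl, hlk⟩ q hln hql).trans (hb ▸ ⟨[b], rfl⟩)

lemma symm_root (hroot : RootCond e) : RootCond e.symm := by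
  have : e ⟨[], by simp [IsPathTo]⟩ = ⟨[], by simp [IsPathTo]⟩ := Subtype.ext hroot
  show ((e.symm ⟨[], _⟩ : ViewTrunc G x k) : List A) = []
  rw [← this, e.symm_apply_apply]

lemma symm_child (hchild : ChildCond e) : ChildCond e.symm := by
  intro p q
  have := (hchild (e.symm p) (e.symm q)).symm
  simpa using this


end iso

section helpers
variable {x y : N} {k : ℕ}

lemma isPathTo_cons {a : A} {l : List A} {x : N} :
    IsPathTo G (a :: l) x ↔ G.t a = x ∧ IsPathTo G l (G.s a) := Iff.rfl

def single (a : {a : A // G.t a = x}) : ViewTrunc G x (k+1) :=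
  ⟨[a.val], ⟨a.2, trivial⟩, by simp⟩

def consV (a : {a : A // G.t a = x}) (p : ViewTrunc G (G.s a.val) k) :
    ViewTrunc G x (k+1) :=
  ⟨a.val :: (p : List A), ⟨a.2, p.2.1⟩, by simpa using p.2.2⟩

lemma exists_arc (q : ViewTrunc G y k) (h : (q : List A).length = 1) :
    ∃ b : {b : A // G.t b = y}, (q : List A) = [b.val] := by
  obtain ⟨b, hb⟩ := List.length_eq_one_iff.mp h
  have h2 := q.2.1
  rw [hb] at h2
  exact ⟨⟨b, h2.1⟩, hb⟩

noncomputable def headArc (q : ViewTrunc G y k) (h : (q : List A).length = 1) :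
    {b : A // G.t b = y} :=
  (exists_arc q h).choose

lemma headArc_spec (q : ViewTrunc G y k) (h : (q : List A).length = 1) :
    (q : List A) = [(headArc q h).val] :=
  (exists_arc q h).choose_spec

end helpers

section forward
variable {x y : N} {k : ℕ} {e : ViewTrunc G x (k+1) ≃ ViewTrunc G y (k+1)}

lemma forward2 (hroot : RootCond e) (hchild : ChildCond e) :
    ∃ ψ : {a : A // G.t a = x} ≃ {b : A // G.t b = y},
      ∀ a : {a : A // G.t a = x}, ViewTruncIso G (G.s a.val) (G.s (ψ a).val) k := by
  have hroot' := symm_root hroot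
  have hchild' := symm_child hchild
  have len1 : ∀ a : {a : A // G.t a = x},
      ((e (single a) : ViewTrunc G y (k+1)) : List A).length = 1 := fun a => by
    rw [map_length hroot hchild]; rfl
  have len1' : ∀ b : {b : A // G.t b = y},
      ((e.symm (single b) : ViewTrunc G x (k+1)) : List A).length = 1 := fun b => by
    rw [map_length hroot' hchild']; rfl
  set Ψf : {a : A // G.t a = x} → {b : A // G.t b = y} :=
    fun a => headArc (e (single a)) (len1 a) with hΨf
  set Ψg : {b : A // G.t b = y} → {a : A // G.t a = x} :=
    fun b => headArc (e.symm (single b)) (len1' b) with hΨg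
  have key : ∀ a, e (single a) = single (Ψf a) := fun a =>
    Subtype.ext (headArc_spec (e (single a)) (len1 a))
  have key' : ∀ b, e.symm (single b) = single (Ψg b) := fun b =>
    Subtype.ext (headArc_spec (e.symm (single b)) (len1' b))
  have hleft : ∀ a, Ψg (Ψf a) = a := by
    intro a
    have h1 : e.symm (single (Ψf a)) = single a := by
      rw [← key a, e.symm_apply_apply]
    have h3 : [(Ψg (Ψf a)).val] = [a.val] :=
      (headArc_spec (e.symm (single (Ψf a))) (len1' (Ψf a))).symm.trans
        (congrArg Subtype.val h1)
    exact Subtype.ext (by simpa using h3)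
  have hright : ∀ b, Ψf (Ψg b) = b := by
    intro b
    have h1 : e (single (Ψg b)) = single b := by
      rw [← key' b, e.apply_symm_apply]
    have h3 : [(Ψf (Ψg b)).val] = [b.val] :=
      (headArc_spec (e (single (Ψg b))) (len1 (Ψg b))).symm.trans
        (congrArg Subtype.val h1)
    exact Subtype.ext (by simpa using h3)
  refine ⟨⟨Ψf, Ψg, hleft, hright⟩, ?_⟩
  intro a
  show ViewTruncIso G (G.s a.val) (G.s (Ψf a).val) k
  -- the image of `consV a p` starts with `(Ψf a).val`
  have hcons : ∀ p : ViewTrunc G (G.s a.val) k,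
      ((e (consV a p) : ViewTrunc G y (k+1)) : List A) =
        (Ψf a).val :: ((e (consV a p) : ViewTrunc G y (k+1)) : List A).tail := by
    intro p
    have hpre := map_prefix hroot hchild (consV a p) (single a) ⟨(p : List A), rfl⟩
    rw [key a] at hpre
    obtain ⟨r, hr⟩ := hpre
    rw [← hr]; rfl
  have hcons' : ∀ q : ViewTrunc G (G.s (Ψf a).val) k,
      ((e.symm (consV (Ψf a) q) : ViewTrunc G x (k+1)) : List A) =
        a.val :: ((e.symm (consV (Ψf a) q) : ViewTrunc G x (k+1)) : List A).tail := by
    intro q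
    have hpre := map_prefix hroot' hchild' (consV (Ψf a) q) (single (Ψf a))
      ⟨(q : List A), rfl⟩
    have h1 : e.symm (single (Ψf a)) = single a := by
      rw [← key a, e.symm_apply_apply]
    rw [h1] at hpre
    obtain ⟨r, hr⟩ := hpre
    rw [← hr]; rfl
  have tmemf : ∀ p : ViewTrunc G (G.s a.val) k,
      IsPathTo G ((e (consV a p) : ViewTrunc G y (k+1)) : List A).tail (G.s (Ψf a).val) ∧
      ((e (consV a p) : ViewTrunc G y (k+1)) : List A).tail.length ≤ k := by
    intro p
    constructor
    · have h4 := (e (consV a p)).2.1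
      rw [hcons p] at h4
      exact h4.2
    · have h5 := map_length hroot hchild (consV a p)
      have h6 := congrArg List.length (hcons p)
      have h7 : ((consV a p : ViewTrunc G x (k+1)) : List A).length = (p : List A).length + 1 := rfl
      simp only [List.length_cons] at h6
      omega
  have tmemg : ∀ q : ViewTrunc G (G.s (Ψf a).val) k,
      IsPathTo G ((e.symm (consV (Ψf a) q) : ViewTrunc G x (k+1)) : List A).tail (G.s a.val) ∧
      ((e.symm (consV (Ψf a) q) : ViewTrunc G x (k+1)) : List A).tail.length ≤ k := by
    intro q
    constructor
    · have h4 := (e.symm (consV (Ψf a) q)).2.1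
      rw [hcons' q] at h4
      exact h4.2
    · have h5 := map_length hroot' hchild' (consV (Ψf a) q)
      have h6 := congrArg List.length (hcons' q)
      have h7 : ((consV (Ψf a) q : ViewTrunc G y (k+1)) : List A).length = (q : List A).length + 1 := rfl
      simp only [List.length_cons] at h6
      omega
  refine ⟨⟨fun p => ⟨((e (consV a p) : ViewTrunc G y (k+1)) : List A).tail,
      (tmemf p).1, (tmemf p).2⟩,
    fun q => ⟨((e.symm (consV (Ψf a) q) : ViewTrunc G x (k+1)) : List A).tail,
      (tmemg q).1, (tmemg q).2⟩, ?_, ?_⟩, ?_, ?_⟩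
  · -- left inverse
    intro p
    apply Subtype.ext
    have h1 : consV (Ψf a) (⟨((e (consV a p) : ViewTrunc G y (k+1)) : List A).tail,
        (tmemf p).1, (tmemf p).2⟩ : ViewTrunc G (G.s (Ψf a).val) k) = e (consV a p) :=
      Subtype.ext (hcons p).symm
    show ((e.symm (consV (Ψf a) _) : ViewTrunc G x (k+1)) : List A).tail = (p : List A)
    rw [h1, e.symm_apply_apply]
    rfl
  · -- right inverse
    intro q
    apply Subtype.ext
    have h1 : consV a (⟨((e.symm (consV (Ψf a) q) : ViewTrunc G x (k+1)) : List A).tail,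
        (tmemg q).1, (tmemg q).2⟩ : ViewTrunc G (G.s a.val) k) = e.symm (consV (Ψf a) q) :=
      Subtype.ext (hcons' q).symm
    show ((e (consV a _) : ViewTrunc G y (k+1)) : List A).tail = (q : List A)
    rw [h1, e.apply_symm_apply]
    rfl
  · -- root condition
    show ((e (consV a ⟨[], by simp [IsPathTo]⟩) : ViewTrunc G y (k+1)) : List A).tail = []
    have h1 : consV a (⟨[], by simp [IsPathTo]⟩ : ViewTrunc G (G.s a.val) k) = single a :=
      Subtype.ext rfl
    rw [h1, key a]
    rfl
  · -- child condition
    intro p q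
    have step1 : (∃ c, (p : List A) = (q : List A) ++ [c]) ↔
        (∃ c, ((consV a p : ViewTrunc G x (k+1)) : List A) =
          ((consV a q : ViewTrunc G x (k+1)) : List A) ++ [c]) := by
      constructor
      · rintro ⟨c, hc⟩; exact ⟨c, by simp [consV, hc]⟩
      · rintro ⟨c, hc⟩
        refine ⟨c, ?_⟩
        have := hc
        simp only [consV, List.cons_append, List.cons.injEq] at this
        exact this.2
    rw [step1, hchild (consV a p) (consV a q)]
    constructor
    · rintro ⟨c, hc⟩
      refine ⟨c, ?_⟩
      have := hc
      rw [hcons p, hcons q] at this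
      simp only [List.cons_append, List.cons.injEq] at this
      exact this.2
    · rintro ⟨c, hc⟩
      refine ⟨c, ?_⟩
      rw [hcons p, hcons q]
      simp only [List.cons_append, List.cons.injEq]
      exact ⟨trivial, hc⟩

end forward

section backward
variable {x y : N} {k : ℕ}

noncomputable def Ffun (ψ : {a : A // G.t a = x} ≃ {b : A // G.t b = y})
    (f : ∀ a : {a : A // G.t a = x},
      ViewTrunc G (G.s a.val) k ≃ ViewTrunc G (G.s (ψ a).val) k) :
    ViewTrunc G x (k+1) → ViewTrunc G y (k+1)
  | ⟨[], _⟩ => ⟨[], trivial, by simp⟩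
  | ⟨a :: l, hp⟩ =>
      ⟨(ψ ⟨a, hp.1.1⟩).val ::
          ((f ⟨a, hp.1.1⟩ ⟨l, hp.1.2, by simpa using hp.2⟩ :
            ViewTrunc G (G.s (ψ ⟨a, hp.1.1⟩).val) k) : List A),
       ⟨(ψ ⟨a, hp.1.1⟩).2, (f _ _).2.1⟩, by simpa using (f _ _).2.2⟩

variable (ψ : {a : A // G.t a = x} ≃ {b : A // G.t b = y})
    (f : ∀ a : {a : A // G.t a = x},
      ViewTrunc G (G.s a.val) k ≃ ViewTrunc G (G.s (ψ a).val) k)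

lemma Ffun_nil (h) : ((Ffun ψ f ⟨[], h⟩ : ViewTrunc G y (k+1)) : List A) = [] := rfl

lemma Ffun_cons (a : A) (l : List A) (hp) :
    ((Ffun ψ f ⟨a :: l, hp⟩ : ViewTrunc G y (k+1)) : List A) =
      (ψ ⟨a, hp.1.1⟩).val ::
        ((f ⟨a, hp.1.1⟩ ⟨l, hp.1.2, by simpa using hp.2⟩ :
          ViewTrunc G (G.s (ψ ⟨a, hp.1.1⟩).val) k) : List A) := rfl

lemma backward
    (h : ∀ a : {a : A // G.t a = x}, ViewTruncIso G (G.s a.val) (G.s (ψ a).val) k) :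
    ViewTruncIso G x y (k+1) := by
  choose f hf1 hf2 using h
  have hinj : Function.Injective (Ffun ψ f) := by
    rintro ⟨pl, hp⟩ ⟨ql, hq⟩ hFeq
    have hv := congrArg Subtype.val hFeq
    match pl, ql, hp, hq, hv with
    | [], [], hp, hq, hv => exact Subtype.ext rfl
    | [], b :: m, hp, hq, hv => simp [Ffun_nil, Ffun_cons] at hv
    | a :: l, [], hp, hq, hv => simp [Ffun_nil, Ffun_cons] at hv
    | a :: l, b :: m, hp, hq, hv =>
      rw [Ffun_cons ψ f a l hp, Ffun_cons ψ f b m hq] at hv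
      simp only [List.cons.injEq] at hv
      have hab : a = b := congrArg Subtype.val (ψ.injective (Subtype.ext hv.1))
      subst hab
      have hlm : l = m := congrArg Subtype.val
        ((f ⟨a, hp.1.1⟩).injective (Subtype.ext hv.2))
      subst hlm
      rfl
  have hsurj : Function.Surjective (Ffun ψ f) := by
    rintro ⟨ql, hq⟩
    match ql, hq with
    | [], hq => exact ⟨⟨[], trivial, by simp⟩, Subtype.ext rfl⟩
    | b :: m, hq =>
      set B : {b : A // G.t b = y} := ⟨b, hq.1.1⟩ with hB
      set a : {a : A // G.t a = x} := ψ.symm B with ha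
      have hAB : ψ a = B := ψ.apply_symm_apply B
      have hABv : (ψ a).val = b := congrArg Subtype.val hAB
      have hM : IsPathTo G m (G.s (ψ a).val) ∧ m.length ≤ k := by
        rw [hABv]
        exact ⟨hq.1.2, by simpa using hq.2⟩
      set L : ViewTrunc G (G.s a.val) k := (f a).symm ⟨m, hM⟩ with hL
      refine ⟨⟨a.val :: (L : List A), ⟨a.2, L.2.1⟩, by simpa using L.2.2⟩, ?_⟩
      apply Subtype.ext
      rw [Ffun_cons]
      show (ψ a).val :: ((f a ((f a).symm ⟨m, hM⟩) :
        ViewTrunc G (G.s (ψ a).val) k) : List A) = b :: m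
      rw [(f a).apply_symm_apply]
      show (ψ a).val :: m = b :: m
      rw [hABv]
  refine ⟨Equiv.ofBijective (Ffun ψ f) ⟨hinj, hsurj⟩, ?_, ?_⟩
  · rfl
  · rintro ⟨pl, hp⟩ ⟨ql, hq⟩
    show (∃ c, pl = ql ++ [c]) ↔
      (∃ c, ((Ffun ψ f ⟨pl, hp⟩ : ViewTrunc G y (k+1)) : List A) =
        ((Ffun ψ f ⟨ql, hq⟩ : ViewTrunc G y (k+1)) : List A) ++ [c])
    constructor
    · rintro ⟨c, hc⟩
      match ql, hq with
      | [], hq =>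
        have hc' : pl = [c] := by simpa using hc
        have hp' : IsPathTo G [c] x ∧ ([c] : List A).length ≤ k + 1 := hc' ▸ hp
        have h1 : (⟨pl, hp⟩ : ViewTrunc G x (k+1)) = ⟨[c], hp'⟩ := Subtype.ext hc'
        rw [h1, Ffun_nil, Ffun_cons]
        refine ⟨(ψ ⟨c, hp'.1.1⟩).val, ?_⟩
        have h2 : ((f ⟨c, hp'.1.1⟩ ⟨[], hp'.1.2, by simpa using hp'.2⟩ :
            ViewTrunc G (G.s (ψ ⟨c, hp'.1.1⟩).val) k) : List A) = [] :=
          map_nil (hf1 ⟨c, hp'.1.1⟩) _ rfl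
        rw [h2]
        rfl
      | b :: l, hq =>
        have hc' : pl = b :: (l ++ [c]) := by simpa using hc
        have hp' : IsPathTo G (b :: (l ++ [c])) x ∧ (b :: (l ++ [c])).length ≤ k + 1 :=
          hc' ▸ hp
        have h1 : (⟨pl, hp⟩ : ViewTrunc G x (k+1)) = ⟨b :: (l ++ [c]), hp'⟩ := Subtype.ext hc'
        rw [h1, Ffun_cons, Ffun_cons]
        have hLc : IsPathTo G (l ++ [c]) (G.s b) ∧ (l ++ [c]).length ≤ k := by
          exact ⟨hp'.1.2, by simpa using hp'.2⟩
        obtain ⟨d, hd⟩ := (hf2 ⟨b, hq.1.1⟩ ⟨l ++ [c], hLc⟩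
          ⟨l, hq.1.2, by simpa using hq.2⟩).mp ⟨c, rfl⟩
        refine ⟨d, ?_⟩
        simp only [List.cons_append, List.cons.injEq]
        have hd' : ((f ⟨b, hp'.1.1⟩ ⟨l ++ [c], hp'.1.2, by simpa using hp'.2⟩ :
            ViewTrunc G (G.s (ψ ⟨b, hp'.1.1⟩).val) k) : List A) =
            ((f ⟨b, hq.1.1⟩ ⟨l, hq.1.2, by simpa using hq.2⟩ :
            ViewTrunc G (G.s (ψ ⟨b, hq.1.1⟩).val) k) : List A) ++ [d] := hd
        exact ⟨trivial, hd'⟩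
    · rintro ⟨c, hc⟩
      match pl, ql, hp, hq, hc with
      | [], [], hp, hq, hc => simp [Ffun_nil] at hc
      | [], b :: m, hp, hq, hc => simp [Ffun_nil, Ffun_cons] at hc
      | a :: l, [], hp, hq, hc =>
        rw [Ffun_cons, Ffun_nil] at hc
        simp only [List.nil_append, List.cons.injEq] at hc
        have hl : l = [] := by
          have h0 : ((f ⟨a, hp.1.1⟩ ⟨l, hp.1.2, by simpa using hp.2⟩ :
              ViewTrunc G (G.s (ψ ⟨a, hp.1.1⟩).val) k) : List A) = [] := hc.2
          have h1 : ((f ⟨a, hp.1.1⟩ ⟨[], trivial, by simp⟩ :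
              ViewTrunc G (G.s (ψ ⟨a, hp.1.1⟩).val) k) : List A) = [] :=
            map_nil (hf1 ⟨a, hp.1.1⟩) _ rfl
          have := (f ⟨a, hp.1.1⟩).injective (Subtype.ext (h0.trans h1.symm))
          exact congrArg Subtype.val this
        subst hl
        exact ⟨a, rfl⟩
      | a :: l, b :: m, hp, hq, hc =>
        rw [Ffun_cons, Ffun_cons] at hc
        rw [List.cons_append] at hc
        simp only [List.cons.injEq] at hc
        have hab : a = b := congrArg Subtype.val (ψ.injective (Subtype.ext hc.1))
        subst hab
        obtain ⟨d, hd⟩ := (hf2 ⟨a, hp.1.1⟩ ⟨l, hp.1.2, by simpa using hp.2⟩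
          ⟨m, hq.1.2, by simpa using hq.2⟩).mpr ⟨c, hc.2⟩
        have hd' : l = m ++ [d] := hd
        exact ⟨d, by simp [hd']⟩

end backward

lemma iso_zero (x y : N) : ViewTruncIso G x y 0 := by
  have hx : ∀ p : ViewTrunc G x 0, (p : List A) = [] := fun p =>
    List.length_eq_zero_iff.mp (Nat.le_antisymm p.2.2 (Nat.zero_le _))
  have hy : ∀ p : ViewTrunc G y 0, (p : List A) = [] := fun p =>
    List.length_eq_zero_iff.mp (Nat.le_antisymm p.2.2 (Nat.zero_le _))
  refine ⟨⟨fun _ => ⟨[], trivial, by simp⟩, fun _ => ⟨[], trivial, by simp⟩,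
    fun p => Subtype.ext (hx p).symm, fun q => Subtype.ext (hy q).symm⟩, rfl, ?_⟩
  intro p q
  constructor
  · rintro ⟨c, hc⟩
    rw [hx p, hx q] at hc
    simp at hc
  · rintro ⟨c, hc⟩
    simp at hc

lemma down : ∀ {k : ℕ} {x y : N}, ViewTruncIso G x y (k+1) → ViewTruncIso G x y k := by
  intro k
  induction k with
  | zero => intro x y _; exact iso_zero x y
  | succ n ih =>
    intro x y h
    obtain ⟨e, h1, h2⟩ := h
    obtain ⟨ψ, hψ⟩ := forward2 h1 h2
    exact backward ψ (fun a => ih (hψ a))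

end ViewAux

/-- Recursive characterization of truncated-view equivalence: `x ≃_{k+1} y` iff
`x ≃_k y` and there is a bijection `ψ` between the in-arcs of `x` and of `y`
with `s(a) ≃_k s(ψ(a))` for every in-arc `a` of `x`. -/
theorem viewTruncIso_succ_iff {N A : Type} (G : Multigraph N A) (x y : N) (k : ℕ) :
    ViewTruncIso G x y (k + 1) ↔
      (ViewTruncIso G x y k ∧
        ∃ e : {a : A // G.t a = x} ≃ {a : A // G.t a = y},
          ∀ a : {a : A // G.t a = x},
            ViewTruncIso G (G.s a.val) (G.s (e a).val) k) := by
  constructor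
  · rintro ⟨e, h1, h2⟩
    exact ⟨ViewAux.down ⟨e, h1, h2⟩, ViewAux.forward2 h1 h2⟩
  · rintro ⟨-, ψ, hψ⟩
    exact ViewAux.backward ψ hψ
end

section
/- Let α: Γ → Aut(G) be a faithful action of a group Γ on a finite directed multigraph G. Then the equivalence relation on nodes of G whose classes are the node-orbits of the action satisfies the local in-isomorphism property; consequently, there is a graph B and a surjective fibration φ: G → B whose fibres are the node-orbits of α. -/
/-!
An automorphism carrying `x` to `y` restricts to a bijection between the in-arcs of `x` and
of `y` that moves each source within its orbit, so orbits have the local in-isomorphism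
property. For any equivalence relation with that property, choose a representative in each
class and a bijection from the in-arcs of every node to those of its representative. The base
graph has the classes as nodes and the in-arcs of the representatives as arcs; sending an arc
to its image under these bijections is a fibration, since the lifts of a base arc at `x` are
exactly its preimage under the bijection chosen at `x`.
-/

namespace Multigraph

variable {N A : Type} (G : Multigraph N A)

def HasLocalInIso (r : N → N → Prop) : Prop :=
  ∀ x y, r x y → ∃ e : {a : A // G.t a = x} ≃ {a : A // G.t a = y},
    ∀ a, r (G.s a.val) (G.s (e a).val)

theorem hasLocalInIso_orbits {ι : Type} (αN : ι → N ≃ N) (αA : ι → A ≃ A)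
    (hs : ∀ g a, G.s (αA g a) = αN g (G.s a)) (ht : ∀ g a, G.t (αA g a) = αN g (G.t a)) :
    G.HasLocalInIso (fun x y => ∃ g, αN g x = y) := by
  rintro x y ⟨g, rfl⟩
  refine ⟨(αA g).subtypeEquiv fun a => ?_, fun a => ⟨g, (hs g a.val).symm⟩⟩
  rw [ht, (αN g).injective.eq_iff]

section Quotient

variable {G} (r : Setoid N)

noncomputable def rep (x : N) : N := (⟦x⟧ : Quotient r).out

theorem rel_rep (x : N) : r x (rep r x) := r.symm' (Quotient.mk_out x)

theorem rep_eq_rep {x y : N} (h : r x y) : rep r x = rep r y := by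
  rw [rep, rep, Quotient.sound h]

def quotientGraph : Multigraph (Quotient r) {a : A // G.t a = rep r (G.t a)} where
  s b := ⟦G.s b.val⟧
  t b := ⟦G.t b.val⟧

variable {r} (hloc : G.HasLocalInIso r)
include hloc

noncomputable def inArcsEquivRep (x : N) : {a : A // G.t a = x} ≃ {a : A // G.t a = rep r x} :=
  Classical.choose (hloc x _ (rel_rep r x))

theorem rel_source_inArcsEquivRep (x : N) (a : {a : A // G.t a = x}) :
    r (G.s a.val) (G.s (inArcsEquivRep hloc x a).val) :=
  Classical.choose_spec (hloc x _ (rel_rep r x)) a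

theorem target_inArcsEquivRep_eq_rep (x : N) (a : {a : A // G.t a = x}) :
    G.t (inArcsEquivRep hloc x a).val = rep r (G.t (inArcsEquivRep hloc x a).val) := by
  rw [(inArcsEquivRep hloc x a).prop, rep_eq_rep r (r.symm' (rel_rep r x))]

noncomputable def toQuotientGraph : GraphHom G (quotientGraph (G := G) r) where
  nodeMap x := ⟦x⟧
  arcMap a := ⟨_, target_inArcsEquivRep_eq_rep hloc (G.t a) ⟨a, rfl⟩⟩
  map_s a := Quotient.sound (r.symm' (rel_source_inArcsEquivRep hloc _ ⟨a, rfl⟩))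
  map_t a := by
    simp only [quotientGraph, (inArcsEquivRep hloc (G.t a) ⟨a, rfl⟩).prop]
    exact Quotient.sound (r.symm' (rel_rep r _))

theorem toQuotientGraph_arcMap_val {x : N} (a : {a : A // G.t a = x}) :
    ((toQuotientGraph hloc).arcMap a.val).val = (inArcsEquivRep hloc x a).val := by
  obtain ⟨a, rfl⟩ := a
  rfl

theorem isFibration_toQuotientGraph : IsFibration (toQuotientGraph hloc) := by
  intro b x hx
  have hb : G.t b.val = rep r x := by
    rw [b.prop]
    exact rep_eq_rep r (Quotient.exact hx.symm)
  let lift := (inArcsEquivRep hloc x).symm ⟨b.val, hb⟩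
  refine ⟨lift.val, ⟨Subtype.ext ?_, lift.prop⟩, fun a ⟨ha, hax⟩ => ?_⟩
  · rw [toQuotientGraph_arcMap_val hloc lift, Equiv.apply_symm_apply]
  · have hval := toQuotientGraph_arcMap_val hloc (⟨a, hax⟩ : {a : A // G.t a = x})
    rw [ha] at hval
    have hlift : (⟨a, hax⟩ : {a : A // G.t a = x}) = lift :=
      (Equiv.eq_symm_apply _).2 (Subtype.ext hval.symm)
    exact congrArg Subtype.val hlift

theorem surjective_arcMap_toQuotientGraph : Function.Surjective (toQuotientGraph hloc).arcMap :=
  fun b => ((isFibration_toQuotientGraph hloc b (G.t b.val) rfl).exists.imp fun _ h => h.1)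

end Quotient

end Multigraph

def orbitSetoid {N Γ : Type} [Group Γ] (ρ : Γ →* Equiv.Perm N) : Setoid N where
  r x y := ∃ g, ρ g x = y
  iseqv :=
    { refl x := ⟨1, by simp⟩
      symm := fun ⟨g, hg⟩ => ⟨g⁻¹, by simp [← hg]⟩
      trans := fun ⟨g, hg⟩ ⟨h, hh⟩ => ⟨h * g, by simp [Equiv.Perm.mul_apply, hg, hh]⟩ }

theorem orbits_local_in_isomorphism_and_fibration_general
    {N A : Type} (G : Multigraph N A)
    {Γ : Type} [Group Γ]
    (αN : Γ → N ≃ N) (αA : Γ → A ≃ A)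
    (hs : ∀ g a, G.s (αA g a) = αN g (G.s a))
    (ht : ∀ g a, G.t (αA g a) = αN g (G.t a))
    (honeN : αN 1 = Equiv.refl N)
    (hmulN : ∀ g h : Γ, αN (g * h) = (αN h).trans (αN g)) :
    (∀ x y : N, (∃ g : Γ, αN g x = y) →
      ∃ e : {a : A // G.t a = x} ≃ {a : A // G.t a = y},
        ∀ a : {a : A // G.t a = x},
          ∃ g : Γ, αN g (G.s a.val) = G.s (e a).val) ∧
    ∃ (N' A' : Type) (B : Multigraph N' A') (φ : GraphHom G B),
      IsFibration φ ∧
      Function.Surjective φ.nodeMap ∧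
      Function.Surjective φ.arcMap ∧
      ∀ x y : N, φ.nodeMap x = φ.nodeMap y ↔ ∃ g : Γ, αN g x = y := by
  let ρ : Γ →* Equiv.Perm N := { toFun := αN, map_one' := honeN, map_mul' := hmulN }
  have hloc : G.HasLocalInIso (orbitSetoid ρ) := G.hasLocalInIso_orbits αN αA hs ht
  exact ⟨hloc, _, _, _, Multigraph.toQuotientGraph hloc,
    Multigraph.isFibration_toQuotientGraph hloc, Quotient.mk_surjective,
    Multigraph.surjective_arcMap_toQuotientGraph hloc, fun _ _ => Quotient.eq⟩

/-- Orbits of a (faithful) group action on a finite graph satisfy the local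
in-isomorphism property; consequently there is a surjective fibration whose
fibres are the node-orbits. -/
theorem orbits_local_in_isomorphism_and_fibration
    {N A : Type} [Fintype N] [Fintype A] (G : Multigraph N A)
    {Γ : Type} [Group Γ]
    (αN : Γ → N ≃ N) (αA : Γ → A ≃ A)
    (hs : ∀ g a, G.s (αA g a) = αN g (G.s a))
    (ht : ∀ g a, G.t (αA g a) = αN g (G.t a))
    (honeN : αN 1 = Equiv.refl N)
    (honeA : αA 1 = Equiv.refl A)
    (hmulN : ∀ g h : Γ, αN (g * h) = (αN h).trans (αN g))
    (hmulA : ∀ g h : Γ, αA (g * h) = (αA h).trans (αA g))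
    (hfaithful : ∀ g h : Γ, αN g = αN h → αA g = αA h → g = h) :
    (∀ x y : N, (∃ g : Γ, αN g x = y) →
      ∃ e : {a : A // G.t a = x} ≃ {a : A // G.t a = y},
        ∀ a : {a : A // G.t a = x},
          ∃ g : Γ, αN g (G.s a.val) = G.s (e a).val) ∧
    ∃ (N' A' : Type) (B : Multigraph N' A') (φ : GraphHom G B),
      IsFibration φ ∧
      Function.Surjective φ.nodeMap ∧
      Function.Surjective φ.arcMap ∧
      ∀ x y : N, φ.nodeMap x = φ.nodeMap y ↔ ∃ g : Γ, αN g x = y :=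
  orbits_local_in_isomorphism_and_fibration_general G αN αA hs ht honeN hmulN
end

section
/- There exists a finite directed multigraph G whose automorphism group is trivial (G is rigid) but which admits a surjective fibration φ: G → B onto a graph B with strictly fewer nodes than G (i.e., φ is a proper nontrivial fibration). -/
set_option maxRecDepth 20000 in
/-- There is a finite rigid graph (only the identity automorphism) admitting a
surjective fibration onto a graph with strictly fewer nodes. -/
theorem exists_rigid_graph_with_proper_fibration :
    ∃ (n m n' m' : ℕ) (G : Multigraph (Fin n) (Fin m))
      (B : Multigraph (Fin n') (Fin m')) (φ : GraphHom G B),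
      (∀ (e : Fin n ≃ Fin n) (f : Fin m ≃ Fin m),
        (∀ a, G.s (f a) = e (G.s a)) → (∀ a, G.t (f a) = e (G.t a)) →
        e = Equiv.refl (Fin n) ∧ f = Equiv.refl (Fin m)) ∧
      IsFibration φ ∧
      Function.Surjective φ.nodeMap ∧
      Function.Surjective φ.arcMap ∧
      n' < n := by
  refine ⟨3, 6, 1, 2, ⟨![0,0,0,1,1,2], ![0,1,2,0,1,2]⟩, ⟨![0,0], ![0,0]⟩,
    ⟨fun _ => 0, ![0,0,0,1,1,1], by decide, by decide⟩, ?_, ?_, ?_, ?_, ?_⟩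
  · decide
  · unfold IsFibration ExistsUnique; decide
  · exact fun y => ⟨0, Subsingleton.elim _ _⟩
  · decide
  · decide
end

section
/- Let ξ: G → B be a surjective quasifibration with total error Δ_ξ. Then there exists a graph G' compatible with G (same node set, common arcs with same endpoints) and a surjective fibration ξ': G' → B agreeing with ξ on all nodes and on all common arcs, such that the symmetric difference of arc sets |A_G Δ A_{G'}| equals Δ_ξ; moreover, for any other compatible graph G'' with a fibration ξ'': G'' → B agreeing with ξ on nodes and common arcs, |A_G Δ A_{G''}| ≥ Δ_ξ. -/
open Classical in
/-- The total error `Δ_ξ = Σ_{a,y} |δ_ξ(a,y)|` of a graph homomorphism `ξ`,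
where `δ_ξ(a,y)` is the number of liftings of the arc `a` at the node `y`
(for `y` in the fibre of the target of `a`) minus one. -/
noncomputable def totalError {N A N' A' : Type} [Fintype N] [Fintype A']
    (G : Multigraph N A) (B : Multigraph N' A') (ξ : GraphHom G B) : ℤ :=
  ∑ a : A', ∑ y : N,
    if ξ.nodeMap y = B.t a then
      |(Nat.card {a' : A // ξ.arcMap a' = a ∧ G.t a' = y} : ℤ) - 1|
    else 0

/-- Ambient universe of potential arcs for graphs compatible with `G` (same
node set `N`): the arcs of `G` together with fresh arcs `(a, x, y, i)` with
prescribed image `a` in the base, source `x`, target `y` and multiplicity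
index `i`. -/
def AmbArc (A A' N : Type) : Type := A ⊕ (A' × N × N × ℕ)

/-- Source of an ambient arc. -/
def ambS {N A A' : Type} (G : Multigraph N A) : AmbArc A A' N → N
  | .inl a => G.s a
  | .inr (_, x, _, _) => x

/-- Target of an ambient arc. -/
def ambT {N A A' : Type} (G : Multigraph N A) : AmbArc A A' N → N
  | .inl a => G.t a
  | .inr (_, _, y, _) => y

/-- Canonical image in the base of an ambient arc. -/
def ambMap {N A N' A' : Type} {G : Multigraph N A} {B : Multigraph N' A'}
    (ξ : GraphHom G B) : AmbArc A A' N → A'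
  | .inl a => ξ.arcMap a
  | .inr (a, _, _, _) => a

/-! A pair `(a, y)` with `ξ y = t a` must have exactly one lift in a fibration. With `k` lifts
in `G`, `|δ_ξ(a, y)| = (k - 1) + (1 - k)` in truncated arithmetic: the `k - 1` surplus lifts must
be deleted by any repair, since at most one of them survives, and when `k = 0` one arc must be
added. Keeping one lift per pair and adding one fresh arc per pair without lifts attains this. -/

open Finset

theorem card_filter_le_one_of_injOn {α β : Type*} [DecidableEq β] (f : α → β) {s : Finset α}
    (hs : Set.InjOn f s) (b : β) : #{a ∈ s | f a = b} ≤ 1 :=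
  card_le_one.mpr fun _ ha _ ha' =>
    hs (mem_filter.mp ha).1 (mem_filter.mp ha').1
      ((mem_filter.mp ha).2.trans (mem_filter.mp ha').2.symm)

section Fibres

variable {α β : Type*} [Fintype α] [Fintype β] (f : α → β)

theorem card_compl_eq_sum_card_fiber_sub [DecidableEq α] [DecidableEq β] (s : Finset α) :
    #sᶜ = ∑ b, (#{a | f a = b} - #{a ∈ s | f a = b}) := by
  rw [card_eq_sum_card_fiberwise (f := f) (t := univ) fun _ _ => mem_univ _]
  refine sum_congr rfl fun b _ => ?_
  rw [← card_sdiff_of_subset (filter_subset_filter _ (subset_univ s))]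
  congr 1
  ext a
  simp only [mem_filter, mem_compl, mem_sdiff, mem_univ, true_and]
  tauto

theorem sum_natCard_fiber_sub_one_le_ncard_compl {s : Set α} (hs : Set.InjOn f s) :
    ∑ b, (Nat.card {a // f a = b} - 1) ≤ sᶜ.ncard := by
  classical
  rw [Set.ncard_eq_toFinset_card', Set.toFinset_compl,
    card_compl_eq_sum_card_fiber_sub f]
  refine sum_le_sum fun b _ => ?_
  rw [Nat.card_eq_fintype_card, Fintype.card_subtype]
  have := card_filter_le_one_of_injOn f (s := s.toFinset) (by simpa using hs) b
  omega

theorem ncard_compl_eq_sum_natCard_fiber_sub_one {s : Set α} (hs : Set.InjOn f s)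
    (himage : f '' s = Set.range f) :
    sᶜ.ncard = ∑ b, (Nat.card {a // f a = b} - 1) := by
  classical
  rw [Set.ncard_eq_toFinset_card', Set.toFinset_compl,
    card_compl_eq_sum_card_fiber_sub f]
  refine sum_congr rfl fun b _ => ?_
  rw [Nat.card_eq_fintype_card, Fintype.card_subtype]
  have hle := card_filter_le_one_of_injOn f (s := s.toFinset) (by simpa using hs) b
  by_cases hb : b ∈ Set.range f
  · obtain ⟨a, ha, rfl⟩ := himage ▸ hb
    have : 0 < #{a' ∈ s.toFinset | f a' = f a} := card_pos.mpr ⟨a, by simpa using ha⟩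
    omega
  · have : #{a | f a = b} = 0 :=
      card_eq_zero.mpr (filter_eq_empty_iff.mpr fun a _ h => hb ⟨a, h⟩)
    omega

end Fibres

theorem Set.ncard_range_inl_diff_union_diff {α β : Type*} [Finite α] (S : Set (α ⊕ β))
    (hS : (Sum.inr ⁻¹' S).Finite) :
    (Set.range Sum.inl \ S ∪ S \ Set.range Sum.inl).ncard =
      (Sum.inl ⁻¹' S)ᶜ.ncard + (Sum.inr ⁻¹' S).ncard := by
  have hl : Set.range Sum.inl \ S = Sum.inl '' (Sum.inl ⁻¹' S)ᶜ := by
    ext (a | b) <;> simp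
  have hr : S \ Set.range Sum.inl = Sum.inr '' (Sum.inr ⁻¹' S) := by
    ext (a | b) <;> simp
  rw [hl, hr, Set.ncard_union_eq _ (Set.toFinite _) (hS.image _),
    Set.ncard_image_of_injective _ Sum.inl_injective,
    Set.ncard_image_of_injective _ Sum.inr_injective]
  exact Set.disjoint_left.mpr (by rintro _ ⟨a, -, rfl⟩ ⟨b, -, h⟩; cases h)

section Repair

variable {N A N' A' : Type} {G : Multigraph N A} {B : Multigraph N' A'} (ξ : GraphHom G B)

def arcClass (a : A) : A' × N := (ξ.arcMap a, G.t a)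

def missingLifts : Set (A' × N) :=
  {p | ξ.nodeMap p.2 = B.t p.1 ∧ p ∉ Set.range (arcClass ξ)}

theorem natCard_arcClass_eq_zero_iff [Finite A] (p : A' × N) :
    Nat.card {a // arcClass ξ a = p} = 0 ↔ p ∉ Set.range (arcClass ξ) := by
  simp [Finite.card_eq_zero_iff, isEmpty_subtype]

theorem abs_natCast_sub_one (k : ℕ) : |(k : ℤ) - 1| = ((k - 1 + (1 - k) : ℕ) : ℤ) := by
  rcases k with _ | k
  · simp
  · simp [abs_of_nonneg]

theorem totalError_eq [Fintype N] [Fintype A] [Fintype A'] :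
    totalError G B ξ =
      ((∑ p, (Nat.card {a // arcClass ξ a = p} - 1) + (missingLifts ξ).ncard : ℕ) : ℤ) := by
  classical
  have hterm (p : A' × N) :
      (if ξ.nodeMap p.2 = B.t p.1 then
        |(Nat.card {a // ξ.arcMap a = p.1 ∧ G.t a = p.2} : ℤ) - 1| else 0) =
      ((Nat.card {a // arcClass ξ a = p} - 1 + if p ∈ missingLifts ξ then 1 else 0 : ℕ) :
        ℤ) := by
    have hcard : Nat.card {a // ξ.arcMap a = p.1 ∧ G.t a = p.2} =
        Nat.card {a // arcClass ξ a = p} :=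
      Nat.card_congr (Equiv.subtypeEquivRight fun _ => by simp [arcClass, Prod.ext_iff])
    have hzero := natCard_arcClass_eq_zero_iff ξ p
    by_cases hp : ξ.nodeMap p.2 = B.t p.1
    · have hmem : p ∈ missingLifts ξ ↔ Nat.card {a // arcClass ξ a = p} = 0 :=
        (and_iff_right hp).trans hzero.symm
      rw [if_pos hp, hcard, abs_natCast_sub_one]
      split_ifs with h
      · have := hmem.mp h
        omega
      · have := mt hmem.mpr h
        omega
    · have hnot : p ∉ Set.range (arcClass ξ) := by
        rintro ⟨a, rfl⟩
        exact hp (ξ.map_t a).symm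
      rw [if_neg hp, if_neg fun h => hp h.1, hzero.mpr hnot]
      rfl
  rw [totalError, ← Fintype.sum_prod_type', Finset.sum_congr rfl fun p _ => hterm p,
    ← Nat.cast_sum, Finset.sum_add_distrib, Finset.sum_boole, Set.ncard_eq_toFinset_card',
    Set.filter_mem_univ_eq_toFinset, Nat.cast_id]

/- `ζ` labels the arcs of the graph `(N, S)`; with `ξ.nodeMap` on nodes it is a map to `B`. -/
def IsHomOn (S : Set (AmbArc A A' N)) (ζ : AmbArc A A' N → A') : Prop :=
  ∀ u ∈ S, B.s (ζ u) = ξ.nodeMap (ambS G u) ∧ B.t (ζ u) = ξ.nodeMap (ambT G u)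

def IsFibrationOn (S : Set (AmbArc A A' N)) (ζ : AmbArc A A' N → A') : Prop :=
  ∀ (a : A') (y : N), ξ.nodeMap y = B.t a → ∃! u, u ∈ S ∧ ζ u = a ∧ ambT G u = y

theorem IsFibrationOn.exists_mem_of_surjective {S : Set (AmbArc A A' N)} {ζ : AmbArc A A' N → A'}
    (hfib : IsFibrationOn ξ S ζ) (hsurj : Function.Surjective ξ.nodeMap) (a : A') :
    ∃ u ∈ S, ζ u = a := by
  obtain ⟨y, hy⟩ := hsurj (B.t a)
  obtain ⟨u, ⟨hu, hua, -⟩, -⟩ := hfib a y hy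
  exact ⟨u, hu, hua⟩

def freshArc (src : A' → N) (p : A' × N) : A' × N × N × ℕ := (p.1, src p.1, p.2, 0)

theorem freshArc_injective (src : A' → N) : Function.Injective (freshArc src) := by
  rintro ⟨a, y⟩ ⟨b, z⟩ h
  simp_all [freshArc]

def repairArcs (K : Set A) (src : A' → N) : Set (AmbArc A A' N) :=
  Sum.inl '' K ∪ Sum.inr '' (freshArc src '' missingLifts ξ)

section RepairArcs

variable (K : Set A) (src : A' → N)

theorem inl_mem_repairArcs {c : A} :
    (Sum.inl c : AmbArc A A' N) ∈ repairArcs ξ K src ↔ c ∈ K := by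
  constructor
  · rintro (⟨b, hb, h⟩ | ⟨_, -, h⟩)
    · exact Sum.inl_injective h ▸ hb
    · cases h
  · exact fun hc => Or.inl ⟨c, hc, rfl⟩

theorem inr_mem_repairArcs {v : A' × N × N × ℕ} :
    (Sum.inr v : AmbArc A A' N) ∈ repairArcs ξ K src ↔
      v ∈ freshArc src '' missingLifts ξ := by
  constructor
  · rintro (⟨_, -, h⟩ | ⟨w, hw, h⟩)
    · cases h
    · exact Sum.inr_injective h ▸ hw
  · exact fun hv => Or.inr ⟨v, hv, rfl⟩

theorem preimage_inl_repairArcs : Sum.inl ⁻¹' repairArcs ξ K src = K :=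
  Set.ext fun _ => inl_mem_repairArcs ξ K src

theorem preimage_inr_repairArcs :
    Sum.inr ⁻¹' repairArcs ξ K src = freshArc src '' missingLifts ξ :=
  Set.ext fun _ => inr_mem_repairArcs ξ K src

theorem repairArcs_finite [Finite A] [Finite A'] [Finite N] : (repairArcs ξ K src).Finite :=
  (K.toFinite.image _).union (((missingLifts ξ).toFinite.image _).image _)

theorem isHomOn_repairArcs {src : A' → N} (hsrc : ∀ a, ξ.nodeMap (src a) = B.s a) :
    IsHomOn ξ (repairArcs ξ K src) (ambMap ξ) := by
  rintro _ (⟨a, -, rfl⟩ | ⟨_, ⟨p, hp, rfl⟩, rfl⟩)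
  · exact ⟨ξ.map_s a, ξ.map_t a⟩
  · exact ⟨(hsrc p.1).symm, hp.1.symm⟩

variable {K}

theorem isFibrationOn_repairArcs (hinj : Set.InjOn (arcClass ξ) K)
    (himage : arcClass ξ '' K = Set.range (arcClass ξ)) :
    IsFibrationOn ξ (repairArcs ξ K src) (ambMap ξ) := by
  intro a y hy
  by_cases hlift : (a, y) ∈ Set.range (arcClass ξ)
  · obtain ⟨b, hbK, hb⟩ := himage ▸ hlift
    refine ⟨.inl b, ⟨(inl_mem_repairArcs ξ K src).mpr hbK, congrArg Prod.fst hb,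
      congrArg Prod.snd hb⟩, ?_⟩
    rintro (c | v) ⟨hc, hca, hct⟩
    · exact congrArg Sum.inl
        (hinj ((inl_mem_repairArcs ξ K src).mp hc) hbK ((Prod.ext hca hct).trans hb.symm))
    · obtain ⟨p, hp, rfl⟩ := (inr_mem_repairArcs ξ K src).mp hc
      exact (hp.2 ((Prod.ext hca hct : p = (a, y)) ▸ hlift)).elim
  · refine ⟨.inr (freshArc src (a, y)),
      ⟨(inr_mem_repairArcs ξ K src).mpr ⟨_, ⟨hy, hlift⟩, rfl⟩, rfl, rfl⟩, ?_⟩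
    rintro (c | v) ⟨hc, hca, hct⟩
    · exact absurd ⟨c, Prod.ext hca hct⟩ hlift
    · obtain ⟨p, -, rfl⟩ := (inr_mem_repairArcs ξ K src).mp hc
      rw [← (Prod.ext hca hct : p = (a, y))]

theorem ncard_symmDiff_repairArcs [Fintype A] [Fintype A'] [Fintype N]
    (hinj : Set.InjOn (arcClass ξ) K) (himage : arcClass ξ '' K = Set.range (arcClass ξ)) :
    (Set.range (Sum.inl : A → AmbArc A A' N) \ repairArcs ξ K src ∪
        repairArcs ξ K src \ Set.range (Sum.inl : A → AmbArc A A' N)).ncard =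
      ∑ p, (Nat.card {a // arcClass ξ a = p} - 1) + (missingLifts ξ).ncard := by
  refine (Set.ncard_range_inl_diff_union_diff _
    ((repairArcs_finite ξ K src).preimage Sum.inr_injective.injOn)).trans ?_
  rw [preimage_inl_repairArcs, preimage_inr_repairArcs,
    Set.ncard_image_of_injective _ (freshArc_injective src),
    ncard_compl_eq_sum_natCard_fiber_sub_one _ hinj himage]

end RepairArcs

section Optimality

variable {S : Set (AmbArc A A' N)} {ζ : AmbArc A A' N → A'}

theorem injOn_arcClass_preimage_inl
    (hagree : ∀ a : A, Sum.inl a ∈ S → ζ (Sum.inl a) = ξ.arcMap a)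
    (hfib : IsFibrationOn ξ S ζ) :
    Set.InjOn (arcClass ξ) (Sum.inl ⁻¹' S) := by
  intro a ha b hb hab
  obtain ⟨u, -, huniq⟩ := hfib _ _ (ξ.map_t a).symm
  have hau := huniq (.inl a) ⟨ha, hagree a ha, rfl⟩
  have hbu := huniq (.inl b)
    ⟨hb, (hagree b hb).trans (congrArg Prod.fst hab).symm, (congrArg Prod.snd hab).symm⟩
  exact Sum.inl_injective (hau.trans hbu.symm)

theorem missingLifts_subset_image_preimage_inr
    (hagree : ∀ a : A, Sum.inl a ∈ S → ζ (Sum.inl a) = ξ.arcMap a)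
    (hfib : IsFibrationOn ξ S ζ) :
    missingLifts ξ ⊆ (fun v => (ζ (.inr v), v.2.2.1)) '' (Sum.inr ⁻¹' S) := by
  rintro ⟨a, y⟩ ⟨hy, hlift⟩
  obtain ⟨u, ⟨hu, hua, huy⟩, -⟩ := hfib a y hy
  rcases u with c | v
  · exact absurd ⟨c, Prod.ext ((hagree c hu).symm.trans hua) huy⟩ hlift
  · exact ⟨v, hu, Prod.ext hua huy⟩

theorem sum_le_ncard_symmDiff_of_isFibrationOn [Fintype A] [Fintype A'] [Fintype N]
    (hS : S.Finite) (hagree : ∀ a : A, Sum.inl a ∈ S → ζ (Sum.inl a) = ξ.arcMap a)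
    (hfib : IsFibrationOn ξ S ζ) :
    ∑ p, (Nat.card {a // arcClass ξ a = p} - 1) + (missingLifts ξ).ncard ≤
      (Set.range (Sum.inl : A → AmbArc A A' N) \ S ∪
        S \ Set.range (Sum.inl : A → AmbArc A A' N)).ncard := by
  have hS' : (Sum.inr ⁻¹' S).Finite := hS.preimage Sum.inr_injective.injOn
  refine le_of_le_of_eq ?_ (Set.ncard_range_inl_diff_union_diff S hS').symm
  exact add_le_add
    (sum_natCard_fiber_sub_one_le_ncard_compl _ (injOn_arcClass_preimage_inl ξ hagree hfib))
    ((Set.ncard_le_ncard (missingLifts_subset_image_preimage_inr ξ hagree hfib)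
      (hS'.image _)).trans (Set.ncard_image_le hS'))

end Optimality

end Repair

theorem graphRepair_general {N A N' A' : Type}
    [Fintype N] [Fintype A] [Fintype A']
    (G : Multigraph N A) (B : Multigraph N' A') (ξ : GraphHom G B)
    (hsurjN : Function.Surjective ξ.nodeMap) :
    ∃ S' : Set (AmbArc A A' N), S'.Finite ∧
      -- `ξ'` (given on arcs by `ambMap ξ`, which agrees with `ξ` on common arcs)
      -- is a graph homomorphism from `G' = (N, S')` to `B`:
      (∀ u ∈ S', B.s (ambMap ξ u) = ξ.nodeMap (ambS G u) ∧
                 B.t (ambMap ξ u) = ξ.nodeMap (ambT G u)) ∧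
      -- `ξ'` is a fibration:
      (∀ (a : A') (y : N), ξ.nodeMap y = B.t a →
        ∃! u : AmbArc A A' N, u ∈ S' ∧ ambMap ξ u = a ∧ ambT G u = y) ∧
      -- `ξ'` is surjective on arcs (it is surjective on nodes since its node
      -- component is `ξ.nodeMap`):
      (∀ a : A', ∃ u ∈ S', ambMap ξ u = a) ∧
      -- minimal change: `|A_G Δ A_{G'}| = Δ_ξ`:
      ((((Set.range (Sum.inl : A → AmbArc A A' N)) \ S') ∪
        (S' \ Set.range (Sum.inl : A → AmbArc A A' N))).ncard
          = (totalError G B ξ).toNat) ∧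
      -- optimality: any other repair changes at least `Δ_ξ` arcs:
      (∀ (S'' : Set (AmbArc A A' N)), S''.Finite →
        ∀ ζ : AmbArc A A' N → A',
          (∀ a : A, Sum.inl a ∈ S'' → ζ (Sum.inl a) = ξ.arcMap a) →
          (∀ u ∈ S'', B.s (ζ u) = ξ.nodeMap (ambS G u) ∧
                      B.t (ζ u) = ξ.nodeMap (ambT G u)) →
          (∀ (a : A') (y : N), ξ.nodeMap y = B.t a →
            ∃! u : AmbArc A A' N, u ∈ S'' ∧ ζ u = a ∧ ambT G u = y) →
          (totalError G B ξ).toNat ≤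
            (((Set.range (Sum.inl : A → AmbArc A A' N)) \ S'') ∪
             (S'' \ Set.range (Sum.inl : A → AmbArc A A' N))).ncard) := by
  obtain ⟨K, himage, hinj⟩ := Set.exists_image_eq_and_injOn Set.univ (arcClass ξ)
  rw [Set.image_univ] at himage
  choose src hsrc using fun a : A' => hsurjN (B.s a)
  have hfib := isFibrationOn_repairArcs ξ src hinj himage
  refine ⟨repairArcs ξ K src, repairArcs_finite ξ K src, isHomOn_repairArcs ξ K hsrc, hfib,
    hfib.exists_mem_of_surjective ξ hsurjN, ?_, fun S hS ζ hagree _ hfibS => ?_⟩ <;>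
    rw [totalError_eq, Int.toNat_natCast]
  · exact ncard_symmDiff_repairArcs ξ src hinj himage
  · exact sum_le_ncard_symmDiff_of_isFibrationOn ξ hS hagree hfibS

/-- Repairing a quasifibration into a fibration ({\scshape GraphRepair}):
given a surjective quasifibration `ξ : G → B`, there is a graph `G'`
(an arc set `S'` in the ambient universe, so `G'` is compatible with `G`)
and a surjective fibration `ξ' : G' → B` agreeing with `ξ` on nodes and on
common arcs, such that the symmetric difference of the arc sets of `G` and
`G'` has exactly `Δ_ξ` elements; moreover every compatible graph `G''` with a
fibration `ξ'' : G'' → B` agreeing with `ξ` on nodes and common arcs differs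
from `G` by at least `Δ_ξ` arcs. -/
theorem graphRepair {N A N' A' : Type}
    [Fintype N] [Fintype A] [Fintype N'] [Fintype A']
    (G : Multigraph N A) (B : Multigraph N' A') (ξ : GraphHom G B)
    (hsurjN : Function.Surjective ξ.nodeMap)
    (hsurjA : Function.Surjective ξ.arcMap) :
    ∃ S' : Set (AmbArc A A' N), S'.Finite ∧
      -- `ξ'` (given on arcs by `ambMap ξ`, which agrees with `ξ` on common arcs)
      -- is a graph homomorphism from `G' = (N, S')` to `B`:
      (∀ u ∈ S', B.s (ambMap ξ u) = ξ.nodeMap (ambS G u) ∧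
                 B.t (ambMap ξ u) = ξ.nodeMap (ambT G u)) ∧
      -- `ξ'` is a fibration:
      (∀ (a : A') (y : N), ξ.nodeMap y = B.t a →
        ∃! u : AmbArc A A' N, u ∈ S' ∧ ambMap ξ u = a ∧ ambT G u = y) ∧
      -- `ξ'` is surjective on arcs (it is surjective on nodes since its node
      -- component is `ξ.nodeMap`):
      (∀ a : A', ∃ u ∈ S', ambMap ξ u = a) ∧
      -- minimal change: `|A_G Δ A_{G'}| = Δ_ξ`:
      ((((Set.range (Sum.inl : A → AmbArc A A' N)) \ S') ∪
        (S' \ Set.range (Sum.inl : A → AmbArc A A' N))).ncard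
          = (totalError G B ξ).toNat) ∧
      -- optimality: any other repair changes at least `Δ_ξ` arcs:
      (∀ (S'' : Set (AmbArc A A' N)), S''.Finite →
        ∀ ζ : AmbArc A A' N → A',
          (∀ a : A, Sum.inl a ∈ S'' → ζ (Sum.inl a) = ξ.arcMap a) →
          (∀ u ∈ S'', B.s (ζ u) = ξ.nodeMap (ambS G u) ∧
                      B.t (ζ u) = ξ.nodeMap (ambT G u)) →
          (∀ (a : A') (y : N), ξ.nodeMap y = B.t a →
            ∃! u : AmbArc A A' N, u ∈ S'' ∧ ζ u = a ∧ ambT G u = y) →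
          (totalError G B ξ).toNat ≤
            (((Set.range (Sum.inl : A → AmbArc A A' N)) \ S'') ∪
             (S'' \ Set.range (Sum.inl : A → AmbArc A A' N))).ncard) :=
  graphRepair_general G B ξ hsurjN
end

section
/- Fix natural numbers v_1 ≤ v_2 ≤ ... ≤ v_k, not all zero. For positive integers h, consider the minimum over all k×h matrices M of natural numbers with row sums (v_1,...,v_k) of Σ_{i,j} |m_{ij} − 1|. Over all positive integers h, this minimum is attained when h is a positive median h* of (v_1,...,v_k), and it then equals Σ_{i=1}^k |v_i − h*| = Σ_{i=1}^k (v_i − h* + 2·max(h* − v_i, 0)). -/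
/-- Cost of a matrix of naturals: `Σ_{i,j} |m_{ij} − 1|`. -/
def matCost {k h : ℕ} (M : Fin k → Fin h → ℕ) : ℤ :=
  ∑ i, ∑ j, |(M i j : ℤ) - 1|

/-- `h` is a positive median of `v` : `h = max 1 m` for some median `m` of the
multiset of values of `v` (at most half of the values lie strictly below `m`
and at most half strictly above). -/
def IsPosMedian {k : ℕ} (v : Fin k → ℕ) (h : ℕ) : Prop :=
  ∃ m : ℕ, h = max 1 m ∧
    2 * (Finset.univ.filter (fun i => v i < m)).card ≤ k ∧
    2 * (Finset.univ.filter (fun i => m < v i)).card ≤ k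

section MainProof
open Finset


private lemma term_abs (a b : ℤ) : a - b + 2 * max (b - a) 0 = |a - b| := by
  rcases le_total b a with h | h
  · rw [max_eq_right (by omega), abs_of_nonneg (by omega)]; ring
  · rw [max_eq_left (by omega), abs_of_nonpos (by omega)]; ring

private lemma sum_range_if_lt (n c : ℕ) :
    ∑ j ∈ Finset.range n, (if j < c then 1 else 0) = min n c := by
  induction n with
  | zero => simp
  | succ n ih => rw [Finset.sum_range_succ, ih]; by_cases h : n < c <;> simp [h] <;> omega

private lemma sum_range_if_lt' (n c : ℕ) :
    ∑ j ∈ Finset.range n, (if j < c then (0:ℤ) else 1) = n - min n c := by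
  induction n with
  | zero => simp
  | succ n ih =>
    rw [Finset.sum_range_succ, ih]
    by_cases h : n < c <;> simp [h] <;> push_cast <;> omega

private lemma F_step_up {k : ℕ} (v : Fin k → ℕ) (m : ℕ)
    (hB : 2 * (univ.filter (fun i => m < v i)).card ≤ k) (x : ℕ) (hx : m ≤ x) :
    ∑ i, |(v i : ℤ) - x| ≤ ∑ i, |(v i : ℤ) - (x + 1 : ℕ)| := by
  have hterm : ∀ i, |(v i : ℤ) - (x+1:ℕ)| - |(v i : ℤ) - x| =
      1 - 2 * (if x < v i then 1 else 0) := by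
    intro i
    rcases le_or_gt (v i) x with h | h
    · have h' : (v i : ℤ) ≤ x := by exact_mod_cast h
      rw [if_neg (by omega), abs_of_nonpos (by push_cast; omega),
        abs_of_nonpos (by push_cast; omega)]
      push_cast; ring
    · have h' : (x:ℤ) < v i := by exact_mod_cast h
      rw [if_pos h, abs_of_nonneg (by push_cast; omega),
        abs_of_nonneg (by push_cast; omega)]
      push_cast; ring
  have hsum : (∑ i, |(v i:ℤ) - (x+1:ℕ)|) - ∑ i, |(v i:ℤ) - x| =
      (k : ℤ) - 2 * (univ.filter (fun i => x < v i)).card := by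
    rw [← Finset.sum_sub_distrib, Finset.sum_congr rfl fun i _ => hterm i,
      Finset.sum_sub_distrib, Finset.sum_const, ← Finset.mul_sum, Finset.sum_boole]
    simp
  have hsub : (univ.filter (fun i => x < v i)) ⊆ (univ.filter (fun i => m < v i)) := by
    intro i hi
    simp only [Finset.mem_filter, Finset.mem_univ, true_and] at hi ⊢
    omega
  have := Finset.card_le_card hsub
  have : ((univ.filter (fun i => x < v i)).card : ℤ) ≤
      ((univ.filter (fun i => m < v i)).card : ℤ) := by exact_mod_cast this
  have hk : (2 * (univ.filter (fun i => m < v i)).card : ℤ) ≤ k := by exact_mod_cast hB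
  linarith

private lemma F_step_down {k : ℕ} (v : Fin k → ℕ) (m : ℕ)
    (hA : 2 * (univ.filter (fun i => v i < m)).card ≤ k) (x : ℕ) (hx : x < m) :
    ∑ i, |(v i : ℤ) - (x + 1 : ℕ)| ≤ ∑ i, |(v i : ℤ) - x| := by
  have hterm : ∀ i, |(v i : ℤ) - x| - |(v i : ℤ) - (x+1:ℕ)| =
      1 - 2 * (if v i ≤ x then 1 else 0) := by
    intro i
    rcases le_or_gt (v i) x with h | h
    · have h' : (v i : ℤ) ≤ x := by exact_mod_cast h
      rw [if_pos h, abs_of_nonpos (by push_cast; omega),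
        abs_of_nonpos (by push_cast; omega)]
      push_cast; ring
    · have h' : (x:ℤ) < v i := by exact_mod_cast h
      rw [if_neg (by omega), abs_of_nonneg (by push_cast; omega),
        abs_of_nonneg (by push_cast; omega)]
      push_cast; ring
  have hsum : (∑ i, |(v i:ℤ) - x|) - ∑ i, |(v i:ℤ) - (x+1:ℕ)| =
      (k : ℤ) - 2 * (univ.filter (fun i => v i ≤ x)).card := by
    rw [← Finset.sum_sub_distrib, Finset.sum_congr rfl fun i _ => hterm i,
      Finset.sum_sub_distrib, Finset.sum_const, ← Finset.mul_sum, Finset.sum_boole]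
    simp
  have hsub : (univ.filter (fun i => v i ≤ x)) ⊆ (univ.filter (fun i => v i < m)) := by
    intro i hi
    simp only [Finset.mem_filter, Finset.mem_univ, true_and] at hi ⊢
    omega
  have := Finset.card_le_card hsub
  have : ((univ.filter (fun i => v i ≤ x)).card : ℤ) ≤
      ((univ.filter (fun i => v i < m)).card : ℤ) := by exact_mod_cast this
  have hk : (2 * (univ.filter (fun i => v i < m)).card : ℤ) ≤ k := by exact_mod_cast hA
  linarith

private lemma F_min {k : ℕ} (v : Fin k → ℕ) (m : ℕ)
    (hA : 2 * (univ.filter (fun i => v i < m)).card ≤ k)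
    (hB : 2 * (univ.filter (fun i => m < v i)).card ≤ k)
    (h : ℕ) (hh : 1 ≤ h) :
    ∑ i, |(v i : ℤ) - (max 1 m : ℕ)| ≤ ∑ i, |(v i : ℤ) - h| := by
  set t := max 1 m with ht
  have hmt : m ≤ t := le_max_right _ _
  have up : ∀ n, t ≤ n → ∑ i, |(v i : ℤ) - t| ≤ ∑ i, |(v i : ℤ) - n| := by
    intro n hn
    induction n, hn using Nat.le_induction with
    | base => exact le_refl _
    | succ n hn ih => exact ih.trans (F_step_up v m hB n (hmt.trans hn))
  rcases le_or_gt t h with hth | hht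
  · exact up h hth
  · -- h < t, h ≥ 1 forces t = m and h < m
    have hm : t = m := by omega
    have down : ∀ j, ∑ i, |(v i : ℤ) - m| ≤ ∑ i, |(v i : ℤ) - (m - j : ℕ)| := by
      intro j
      induction j with
      | zero => simp
      | succ j ih =>
        rcases le_or_gt m j with hj | hj
        · have : m - (j+1) = m - j := by omega
          rw [this]; exact ih
        · have e : m - (j+1) + 1 = m - j := by omega
          refine ih.trans ?_
          have := F_step_down v m hA (m - (j+1)) (by omega)
          rwa [e] at this
    have := down (m - h)
    have e : m - (m - h) = h := by omega
    rw [e] at this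
    rw [hm]
    exact this
/-- The minimum, over the number of columns `h ≥ 1` and over `k × h` matrices
of naturals with row sums `v_1 ≤ … ≤ v_k` (not all zero), of the cost
`Σ_{i,j} |m_{ij} − 1|` is attained when `h` is a positive median `h*` of
`(v_1, …, v_k)`, and equals `Σ_i (v_i − h* + 2·max(h* − v_i, 0))`. -/
theorem min_matrix_cost_at_positive_median {k : ℕ} (v : Fin k → ℕ)
    (hmono : Monotone v) (hnz : ∃ i, v i ≠ 0)
    (hstar : ℕ) (hmed : IsPosMedian v hstar) :
    IsLeast {c : ℤ | ∃ h : ℕ, 1 ≤ h ∧ ∃ M : Fin k → Fin h → ℕ,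
        (∀ i, (∑ j, M i j) = v i) ∧ c = matCost M}
      (∑ i, ((v i : ℤ) - hstar + 2 * max ((hstar : ℤ) - v i) 0)) ∧
    (∃ M : Fin k → Fin hstar → ℕ, (∀ i, (∑ j, M i j) = v i) ∧
      matCost M = ∑ i, ((v i : ℤ) - hstar + 2 * max ((hstar : ℤ) - v i) 0)) := by
  obtain ⟨m, hm, hA, hB⟩ := hmed
  have h1 : 1 ≤ hstar := by omega
  -- the target equals Σ |v i - hstar|
  have htgt : (∑ i, ((v i : ℤ) - hstar + 2 * max ((hstar : ℤ) - v i) 0)) =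
      ∑ i, |(v i : ℤ) - hstar| := Finset.sum_congr rfl fun i _ => term_abs _ _
  -- the optimal matrix
  set M : Fin k → Fin hstar → ℕ := fun i j =>
    if v i < hstar then (if (j : ℕ) < v i then 1 else 0)
    else 1 + (if (j : ℕ) = 0 then v i - hstar else 0) with hM
  have hrows : ∀ i, (∑ j, M i j) = v i := by
    intro i
    by_cases hc : v i < hstar
    · simp only [hM, if_pos hc]
      rw [Fin.sum_univ_eq_sum_range (fun j => if j < v i then 1 else 0), sum_range_if_lt]
      omega
    · simp only [hM, if_neg hc]
      rw [Finset.sum_add_distrib, Finset.sum_const,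
        Fin.sum_univ_eq_sum_range (fun j => if j = 0 then v i - hstar else 0),
        Finset.sum_ite_eq' (Finset.range hstar) 0 (fun _ => v i - hstar),
        if_pos (Finset.mem_range.2 h1)]
      simp; omega
  have hcost : matCost M = ∑ i, |(v i : ℤ) - hstar| := by
    unfold matCost
    refine Finset.sum_congr rfl fun i _ => ?_
    by_cases hc : v i < hstar
    · have : ∀ j : Fin hstar, |(M i j : ℤ) - 1| = (if (j:ℕ) < v i then (0:ℤ) else 1) := by
        intro j
        simp only [hM, if_pos hc]
        by_cases hj : (j:ℕ) < v i <;> simp [hj]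
      rw [Finset.sum_congr rfl fun j _ => this j,
        Fin.sum_univ_eq_sum_range (fun j => if j < v i then (0:ℤ) else 1), sum_range_if_lt',
        abs_of_nonpos (by push_cast; omega)]
      have : min hstar (v i) = v i := by omega
      rw [this]; push_cast; ring
    · have : ∀ j : Fin hstar, |(M i j : ℤ) - 1| =
          (if (j:ℕ) = 0 then ((v i - hstar : ℕ) : ℤ) else 0) := by
        intro j
        simp only [hM, if_neg hc]
        by_cases hj : (j:ℕ) = 0 <;> simp [hj]
      rw [Finset.sum_congr rfl fun j _ => this j,
        Fin.sum_univ_eq_sum_range (fun j => if j = 0 then ((v i - hstar : ℕ) : ℤ) else 0),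
        Finset.sum_ite_eq' (Finset.range hstar) 0 (fun _ => ((v i - hstar : ℕ) : ℤ)),
        if_pos (Finset.mem_range.2 h1), abs_of_nonneg (by push_cast; omega)]
      push_cast; omega
  refine ⟨⟨⟨hstar, h1, M, hrows, by rw [hcost, htgt]⟩, ?_⟩, M, hrows, by rw [hcost, htgt]⟩
  rintro c ⟨h, hh, N, hNrows, rfl⟩
  rw [htgt]
  have lb : ∑ i, |(v i : ℤ) - h| ≤ matCost N := by
    unfold matCost
    refine Finset.sum_le_sum fun i _ => ?_
    have := Finset.abs_sum_le_sum_abs (fun j => (N i j : ℤ) - 1) Finset.univ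
    refine le_trans (le_of_eq ?_) this
    rw [Finset.sum_sub_distrib, Finset.sum_const]
    have : ((∑ j, N i j : ℕ) : ℤ) = ∑ j, (N i j : ℤ) := by push_cast; ring
    rw [← this, hNrows i]
    simp
  calc ∑ i, |(v i : ℤ) - hstar| = ∑ i, |(v i : ℤ) - (max 1 m : ℕ)| := by rw [← hm]
    _ ≤ ∑ i, |(v i : ℤ) - h| := F_min v m hA hB h hh
    _ ≤ matCost N := lb
end MainProof
end

section
/- Let ξ: G → B be a surjective graph homomorphism whose fibres are the equivalence classes of an equivalence relation ∼ on N_G. For equivalence classes X, Y with Y = {y_1,...,y_k}, let v_i = |{a ∈ A_G : t(a) = y_i, s(a) ∈ X}|. Then the contribution to the total error Δ_ξ from pairs (a, y) with a ∈ B(X,Y) and y ∈ Y is at least min over h ≥ 1 of Σ_{i=1}^k (v_i − h + 2·max(h − v_i, 0)), which equals the value at h = a positive median of (v_1,...,v_k); in particular Δ_ξ is bounded below by the sum of these per-class-pair minima. -/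
/-- `vval ξ X y` : the number of arcs of `G` with target `y` whose source lies
in the class (fibre) `X`. -/
noncomputable def vval {N A N' A' : Type} {G : Multigraph N A} {B : Multigraph N' A'}
    (ξ : GraphHom G B) (X : N') (y : N) : ℕ :=
  Nat.card {a : A // G.t a = y ∧ ξ.nodeMap (G.s a) = X}

open Classical in
/-- The contribution to the total error `Δ_ξ` of the pairs `(a, y)` with
`a ∈ B(X,Y)` and `y` in the class `Y`. -/
noncomputable def contribution {N A N' A' : Type} [Fintype N] [Fintype A']
    (G : Multigraph N A) (B : Multigraph N' A') (ξ : GraphHom G B) (X Y : N') : ℤ :=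
  ∑ a : A', ∑ y : N,
    if B.s a = X ∧ B.t a = Y ∧ ξ.nodeMap y = Y then
      |(Nat.card {a' : A // ξ.arcMap a' = a ∧ G.t a' = y} : ℤ) - 1|
    else 0

open Classical in
/-- `gfun ξ X Y h = Σ_{y ∈ Y} (v_y − h + 2·max(h − v_y, 0))`, the optimal
contribution achievable with `h` parallel base arcs from `X` to `Y`. -/
noncomputable def gfun {N A N' A' : Type} [Fintype N] {G : Multigraph N A}
    {B : Multigraph N' A'} (ξ : GraphHom G B) (X Y : N') (h : ℕ) : ℤ :=
  ∑ y : N,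
    if ξ.nodeMap y = Y then
      ((vval ξ X y : ℤ) - h + 2 * max ((h : ℤ) - vval ξ X y) 0)
    else 0

open Classical in
/-- `h` is a positive median of the multiset of values `v_y` for `y` in the
class `Y`. -/
def IsPosMedianOnFibre {N A N' A' : Type} [Fintype N] {G : Multigraph N A}
    {B : Multigraph N' A'} (ξ : GraphHom G B) (X Y : N') (h : ℕ) : Prop :=
  ∃ m : ℕ, h = max 1 m ∧
    2 * (Finset.univ.filter (fun y : N => ξ.nodeMap y = Y ∧ vval ξ X y < m)).card ≤
      (Finset.univ.filter (fun y : N => ξ.nodeMap y = Y)).card ∧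
    2 * (Finset.univ.filter (fun y : N => ξ.nodeMap y = Y ∧ m < vval ξ X y)).card ≤
      (Finset.univ.filter (fun y : N => ξ.nodeMap y = Y)).card

/-!
Sort the arcs of `G` that enter a node `y ∈ Y` from `X` by their image `a ∈ B(X,Y)`: the
numbers `n_a` of lifts sum to `v_y`, so by the triangle inequality
`∑_a |n_a - 1| ≥ |v_y - |B(X,Y)||`. Summed over `y ∈ Y`, the contribution of `(X,Y)` is at least
`f |B(X,Y)|` with `f h = ∑_y |v_y - h|` (the summand in the statement is `|v_y - h|` written
without absolute values), and `|B(X,Y)| ≥ 1` as soon as some `v_y > 0`. Moving `h` up from a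
median `m` by `d` raises the terms with `v_y ≤ m` by exactly `d` and lowers the others by at
most `d`; there are at least as many of the former, so `f` is minimised at a median, also under
the constraint `h ≥ 1`. The contributions of the pairs `(X,Y)` are nonnegative and add up
to `Δ_ξ`.
-/

section Median

open Finset

variable {ι α : Type*} [AddCommGroup α] [LinearOrder α] [IsOrderedAddMonoid α]

lemma neg_sub_le_abs_sub_sub_abs_sub {m h : α} (hmh : m ≤ h) (v : α) :
    (if m < v then -(h - m) else h - m) ≤ |v - h| - |v - m| := by
  split_ifs with hv
  · have := abs_sub_abs_le_abs_sub (v - m) (v - h)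
    rw [sub_sub_sub_cancel_left, abs_of_nonneg (sub_nonneg.2 hmh)] at this
    rwa [neg_le, neg_sub]
  · have hvm : v ≤ m := not_lt.1 hv
    rw [abs_of_nonpos (sub_nonpos.2 (hvm.trans hmh)), abs_of_nonpos (sub_nonpos.2 hvm),
      neg_sub, neg_sub, sub_sub_sub_cancel_right]

lemma sum_abs_sub_le_of_le (s : Finset ι) (v : ι → α) {m h : α}
    (hm : 2 * #{y ∈ s | m < v y} ≤ #s) (hmh : m ≤ h) :
    ∑ y ∈ s, |v y - m| ≤ ∑ y ∈ s, |v y - h| := by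
  have hcard := s.card_filter_add_card_filter_not (fun y => m < v y)
  have hbalance : #{y ∈ s | m < v y} • (h - m) ≤ #{y ∈ s | ¬ m < v y} • (h - m) :=
    nsmul_le_nsmul_left (sub_nonneg.2 hmh) (by omega)
  have hsum := sum_le_sum fun y (_ : y ∈ s) => neg_sub_le_abs_sub_sub_abs_sub hmh (v y)
  rw [sum_ite, sum_const, sum_const, sum_sub_distrib, smul_neg, neg_add_eq_sub] at hsum
  exact sub_nonneg.1 ((sub_nonneg.2 hbalance).trans hsum)

lemma sum_abs_sub_le_of_ge (s : Finset ι) (v : ι → α) {m h : α}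
    (hm : 2 * #{y ∈ s | v y < m} ≤ #s) (hhm : h ≤ m) :
    ∑ y ∈ s, |v y - m| ≤ ∑ y ∈ s, |v y - h| := by
  have := sum_abs_sub_le_of_le s (fun y => -v y) (m := -m) (h := -h)
    (by simpa only [neg_lt_neg_iff] using hm) (neg_le_neg hhm)
  simpa only [← neg_sub', abs_neg] using this

lemma sum_abs_sub_max_le (s : Finset ι) (v : ι → α) {c m h : α}
    (hlt : 2 * #{y ∈ s | v y < m} ≤ #s) (hgt : 2 * #{y ∈ s | m < v y} ≤ #s) (hch : c ≤ h) :
    ∑ y ∈ s, |v y - max c m| ≤ ∑ y ∈ s, |v y - h| := by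
  rcases le_or_gt (max c m) h with hle | hgt'
  · refine sum_abs_sub_le_of_le s v (le_trans ?_ hgt) hle
    exact Nat.mul_le_mul_left 2 <| card_le_card <|
      monotone_filter_right s fun _ _ hy => (le_max_right c m).trans_lt hy
  · have hcm : c ≤ m := by
      by_contra! hmc
      rw [max_eq_left hmc.le] at hgt'
      exact hgt'.not_ge hch
    rw [max_eq_right hcm] at hgt' ⊢
    exact sum_abs_sub_le_of_ge s v hlt hgt'.le

end Median

section Graph

open Classical Finset

variable {N A N' A' : Type} {G : Multigraph N A} {B : Multigraph N' A'}

noncomputable def Multigraph.arcsBetween [Fintype A'] (B : Multigraph N' A') (X Y : N') :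
    Finset A' :=
  {a | B.s a = X ∧ B.t a = Y}

noncomputable def GraphHom.fibre [Fintype N] (ξ : GraphHom G B) (Y : N') : Finset N :=
  {y | ξ.nodeMap y = Y}

noncomputable def GraphHom.lifts [Fintype A] (ξ : GraphHom G B) (a : A') (y : N) : Finset A :=
  {a' | ξ.arcMap a' = a ∧ G.t a' = y}

variable (ξ : GraphHom G B)

lemma natCard_lifts [Fintype A] (a : A') (y : N) :
    Nat.card {a' : A // ξ.arcMap a' = a ∧ G.t a' = y} = #(ξ.lifts a y) := by
  rw [Nat.card_eq_fintype_card, Fintype.card_subtype, GraphHom.lifts]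

lemma gfun_eq_sum_abs [Fintype N] (X Y : N') (h : ℕ) :
    gfun ξ X Y h = ∑ y ∈ ξ.fibre Y, |(vval ξ X y : ℤ) - h| := by
  rw [gfun, GraphHom.fibre, sum_filter]
  refine sum_congr rfl fun y _ => if_congr Iff.rfl ?_ rfl
  rw [abs_eq_max_neg]
  omega

lemma vval_eq_sum_card_lifts [Fintype A] [Fintype A'] {X Y : N'} {y : N}
    (hy : ξ.nodeMap y = Y) :
    vval ξ X y = ∑ a ∈ B.arcsBetween X Y, #(ξ.lifts a y) := by
  have hmaps : Set.MapsTo ξ.arcMap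
      (({a' | G.t a' = y ∧ ξ.nodeMap (G.s a') = X} : Finset A) : Set A) (B.arcsBetween X Y) := by
    intro a' ha'
    simp only [Multigraph.arcsBetween, mem_coe, mem_filter, mem_univ, true_and] at ha' ⊢
    rw [ξ.map_s, ξ.map_t, ha'.1, ha'.2, hy]
    exact ⟨rfl, rfl⟩
  rw [vval, Nat.card_eq_fintype_card, Fintype.card_subtype, card_eq_sum_card_fiberwise hmaps]
  refine sum_congr rfl fun a ha => congrArg card ?_
  simp only [Multigraph.arcsBetween, mem_filter, mem_univ, true_and] at ha
  ext a'
  simp only [GraphHom.lifts, mem_filter, mem_univ, true_and]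
  constructor
  · exact fun ⟨⟨ht, _⟩, hmap⟩ => ⟨hmap, ht⟩
  · rintro ⟨hmap, ht⟩
    exact ⟨⟨ht, by rw [← ξ.map_s, hmap, ha.1]⟩, hmap⟩

lemma contribution_eq_sum [Fintype N] [Fintype A] [Fintype A'] (X Y : N') :
    contribution G B ξ X Y =
      ∑ y ∈ ξ.fibre Y, ∑ a ∈ B.arcsBetween X Y, |(#(ξ.lifts a y) : ℤ) - 1| := by
  rw [contribution, sum_comm, GraphHom.fibre, sum_filter]
  refine sum_congr rfl fun y _ => ?_
  split_ifs with hy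
  · rw [Multigraph.arcsBetween, sum_filter]
    exact sum_congr rfl fun a _ => by simp only [hy, and_true, natCard_lifts]
  · exact sum_eq_zero fun a _ => if_neg fun h => hy h.2.2

lemma contribution_nonneg [Fintype N] [Fintype A] [Fintype A'] (X Y : N') :
    0 ≤ contribution G B ξ X Y := by
  rw [contribution_eq_sum]
  exact sum_nonneg fun _ _ => sum_nonneg fun _ _ => abs_nonneg _

lemma gfun_card_arcsBetween_le_contribution [Fintype N] [Fintype A] [Fintype A'] (X Y : N') :
    gfun ξ X Y #(B.arcsBetween X Y) ≤ contribution G B ξ X Y := by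
  rw [gfun_eq_sum_abs, contribution_eq_sum]
  refine sum_le_sum fun y hy => ?_
  rw [vval_eq_sum_card_lifts ξ (mem_filter.1 hy).2]
  calc |((∑ a ∈ B.arcsBetween X Y, #(ξ.lifts a y) : ℕ) : ℤ) - #(B.arcsBetween X Y)|
      = |∑ a ∈ B.arcsBetween X Y, ((#(ξ.lifts a y) : ℤ) - 1)| := by
        rw [sum_sub_distrib, card_eq_sum_ones (B.arcsBetween X Y), Nat.cast_sum, Nat.cast_sum,
          Nat.cast_one]
    _ ≤ _ := abs_sum_le_sum_abs _ _

lemma totalError_eq_sum_contribution [Fintype N] [Fintype N'] [Fintype A'] :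
    totalError G B ξ = ∑ X : N', ∑ Y : N', contribution G B ξ X Y := by
  simp only [totalError, contribution]
  simp_rw [sum_comm (s := (univ : Finset N')) (t := (univ : Finset A')),
    sum_comm (s := (univ : Finset N')) (t := (univ : Finset N))]
  refine sum_congr rfl fun a _ => sum_congr rfl fun y _ => ?_
  simp [ite_and]

lemma one_le_card_arcsBetween [Fintype A] [Fintype A'] {X Y : N'} {y : N}
    (hy : ξ.nodeMap y = Y) (hv : 0 < vval ξ X y) : 1 ≤ #(B.arcsBetween X Y) := by
  rw [vval_eq_sum_card_lifts ξ hy] at hv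
  exact card_pos.2 (nonempty_of_sum_ne_zero hv.ne')

lemma gfun_nonneg [Fintype N] (X Y : N') (h : ℕ) : 0 ≤ gfun ξ X Y h := by
  rw [gfun_eq_sum_abs]
  exact sum_nonneg fun _ _ => abs_nonneg _

lemma csInf_gfun_le [Fintype N] (X Y : N') {h : ℕ} (hh : 1 ≤ h) :
    sInf {c : ℤ | ∃ h : ℕ, 1 ≤ h ∧ c = gfun ξ X Y h} ≤ gfun ξ X Y h :=
  csInf_le ⟨0, fun _ ⟨h, _, hc⟩ => hc ▸ gfun_nonneg ξ X Y h⟩ ⟨h, hh, rfl⟩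

lemma csInf_gfun_le_contribution [Fintype N] [Fintype A] [Fintype A'] {X Y : N'}
    (hpos : ∃ y : N, ξ.nodeMap y = Y ∧ 0 < vval ξ X y) :
    sInf {c : ℤ | ∃ h : ℕ, 1 ≤ h ∧ c = gfun ξ X Y h} ≤ contribution G B ξ X Y :=
  let ⟨_, hy, hv⟩ := hpos
  (csInf_gfun_le ξ X Y (one_le_card_arcsBetween ξ hy hv)).trans
    (gfun_card_arcsBetween_le_contribution ξ X Y)

lemma isLeast_gfun_of_isPosMedianOnFibre [Fintype N] {X Y : N'} {h : ℕ}
    (hmed : IsPosMedianOnFibre ξ X Y h) :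
    IsLeast {c : ℤ | ∃ h' : ℕ, 1 ≤ h' ∧ c = gfun ξ X Y h'} (gfun ξ X Y h) := by
  obtain ⟨m, rfl, hlt, hgt⟩ := hmed
  refine ⟨⟨_, le_max_left 1 m, rfl⟩, ?_⟩
  rintro _ ⟨h', hh', rfl⟩
  rw [gfun_eq_sum_abs, gfun_eq_sum_abs, Nat.cast_max, Nat.cast_one]
  refine sum_abs_sub_max_le _ _ ?_ ?_ (by exact_mod_cast hh')
  · simpa only [GraphHom.fibre, filter_filter, Nat.cast_lt] using hlt
  · simpa only [GraphHom.fibre, filter_filter, Nat.cast_lt] using hgt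

end Graph

open Classical in
theorem contribution_lower_bound_general {N A N' A' : Type}
    [Fintype N] [Fintype A] [Fintype N'] [Fintype A']
    (G : Multigraph N A) (B : Multigraph N' A') (ξ : GraphHom G B) :
    (∀ X Y : N', (∃ y : N, ξ.nodeMap y = Y ∧ 0 < vval ξ X y) →
      (sInf {c : ℤ | ∃ h : ℕ, 1 ≤ h ∧ c = gfun ξ X Y h} ≤ contribution G B ξ X Y) ∧
      (∀ h : ℕ, IsPosMedianOnFibre ξ X Y h →
        gfun ξ X Y h = sInf {c : ℤ | ∃ h' : ℕ, 1 ≤ h' ∧ c = gfun ξ X Y h'})) ∧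
    (∑ X : N', ∑ Y : N',
        if ∃ y : N, ξ.nodeMap y = Y ∧ 0 < vval ξ X y then
          sInf {c : ℤ | ∃ h : ℕ, 1 ≤ h ∧ c = gfun ξ X Y h}
        else 0)
      ≤ totalError G B ξ := by
  refine ⟨fun X Y hpos => ⟨csInf_gfun_le_contribution ξ hpos, fun h hmed =>
    (isLeast_gfun_of_isPosMedianOnFibre ξ hmed).csInf_eq.symm⟩, ?_⟩
  rw [totalError_eq_sum_contribution]
  refine Finset.sum_le_sum fun X _ => Finset.sum_le_sum fun Y _ => ?_
  split_ifs with hpos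
  · exact csInf_gfun_le_contribution ξ hpos
  · exact contribution_nonneg ξ X Y

open Classical in
/-- For a surjective homomorphism `ξ` whose fibres are the classes of `∼`, the
contribution to `Δ_ξ` of each pair of classes `(X, Y)` (with some `v_i > 0`)
is at least `min_{h ≥ 1} Σ_i (v_i − h + 2·max(h − v_i, 0))`, which equals the
value of that sum at a positive median of `(v_1, …, v_k)`; in particular
`Δ_ξ` is bounded below by the sum of these per-class-pair minima. -/
theorem contribution_lower_bound {N A N' A' : Type}
    [Fintype N] [Fintype A] [Fintype N'] [Fintype A']
    (G : Multigraph N A) (B : Multigraph N' A') (ξ : GraphHom G B)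
    (hsurjN : Function.Surjective ξ.nodeMap)
    (hsurjA : Function.Surjective ξ.arcMap) :
    (∀ X Y : N', (∃ y : N, ξ.nodeMap y = Y ∧ 0 < vval ξ X y) →
      (sInf {c : ℤ | ∃ h : ℕ, 1 ≤ h ∧ c = gfun ξ X Y h} ≤ contribution G B ξ X Y) ∧
      (∀ h : ℕ, IsPosMedianOnFibre ξ X Y h →
        gfun ξ X Y h = sInf {c : ℤ | ∃ h' : ℕ, 1 ≤ h' ∧ c = gfun ξ X Y h'})) ∧
    (∑ X : N', ∑ Y : N',
        if ∃ y : N, ξ.nodeMap y = Y ∧ 0 < vval ξ X y then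
          sInf {c : ℤ | ∃ h : ℕ, 1 ≤ h ∧ c = gfun ξ X Y h}
        else 0)
      ≤ totalError G B ξ :=
  contribution_lower_bound_general G B ξ
end
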